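/- arXiv:1912.03352 — 6 statements merged into one kernel-verified Lean document; each statement's English description precedes it below -/
import Mathlib

section
/- For integers n ≥ 0 and m ≥ 1 and z ∈ ℂ, one has Σ_{k=0}^n C(n+m, k+m) z^k = ((n+m)!/((m-1)! n!)) ∫_0^1 (1-t)^{m-1} (1+zt)^n dt. -/
/-!
Expand `(1 + z t)^n` binomially and integrate term by term: the Beta integral
`∫₀¹ t^k (1 - t)^j dt = k! j! / (k + j + 1)!` turns the coefficient of `z^k` into
`C(n, k) k! (m - 1)! / (k + m)!`, which the prefactor `(n + m)! / ((m - 1)! n!)` converts into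
`C(n + m, k + m)`.
-/

open MeasureTheory

open scoped Nat

theorem integral_pow_mul_one_sub_pow (k j : ℕ) :
    ∫ t in (0:ℝ)..1, (t : ℂ) ^ k * (1 - (t : ℂ)) ^ j = (k ! * j ! : ℂ) / (k + j + 1)! := by
  have hbeta := Complex.betaIntegral_eval_nat_add_one_right
    (u := k + 1) (by simp only [Complex.add_re, Complex.natCast_re, Complex.one_re]; positivity) j
  simp only [Complex.betaIntegral, add_sub_cancel_right, Complex.cpow_natCast] at hbeta
  have hprod : ∏ i ∈ Finset.range (j + 1), ((k : ℂ) + 1 + i) = (k + j + 1)! / k ! := by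
    rw [eq_div_iff (Nat.cast_ne_zero.2 (Nat.factorial_ne_zero k)), add_assoc k,
      ← Nat.factorial_mul_ascFactorial, Nat.ascFactorial_eq_prod_range]
    push_cast
    ring
  rw [hbeta, hprod]
  field_simp

theorem integral_one_sub_pow_mul_one_add_mul_pow (j n : ℕ) (z : ℂ) :
    ∫ t in (0:ℝ)..1, (1 - (t : ℂ)) ^ j * (1 + z * t) ^ n
      = ∑ k ∈ Finset.range (n + 1), n.choose k * z ^ k * ((k ! * j ! : ℂ) / (k + j + 1)!) := by
  have hexpand (t : ℝ) : (1 - (t : ℂ)) ^ j * (1 + z * t) ^ n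
      = ∑ k ∈ Finset.range (n + 1), n.choose k * z ^ k * ((t : ℂ) ^ k * (1 - (t : ℂ)) ^ j) := by
    rw [add_comm, add_pow, Finset.mul_sum]
    refine Finset.sum_congr rfl fun k _ => ?_
    ring
  simp_rw [hexpand]
  rw [intervalIntegral.integral_finsetSum fun k _ => by
    apply Continuous.intervalIntegrable; fun_prop]
  simp_rw [intervalIntegral.integral_const_mul, integral_pow_mul_one_sub_pow]

theorem Nat.choose_add_mul_factorial_mul_factorial (n m k : ℕ) :
    (n + m).choose (k + m) * (k + m)! * n ! = (n + m)! * n.choose k * k ! := by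
  rcases le_or_gt k n with hk | hk
  · have hbig := choose_mul_factorial_mul_factorial (show k + m ≤ n + m by omega)
    have hsmall := choose_mul_factorial_mul_factorial hk
    rw [show n + m - (k + m) = n - k by omega] at hbig
    apply Nat.eq_of_mul_eq_mul_right (factorial_pos (n - k))
    calc _ = (n + m).choose (k + m) * (k + m)! * (n - k)! * n ! := by ring
      _ = (n + m)! * (n.choose k * k ! * (n - k)!) := by rw [hbig, hsmall]
      _ = _ := by ring
  · rw [choose_eq_zero_of_lt hk, choose_eq_zero_of_lt (by omega)]
    simp

theorem stmt3 (n m : ℕ) (hm : 0 < m) (z : ℂ) :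
    ∑ k ∈ Finset.range (n + 1), ((n + m).choose (k + m) : ℂ) * z ^ k
      = ((Nat.factorial (n + m) : ℂ) /
          ((Nat.factorial (m - 1) : ℂ) * (Nat.factorial n : ℂ))) *
        ∫ t in (0:ℝ)..1, ((1 : ℂ) - (t : ℂ)) ^ (m - 1) * (1 + z * (t : ℂ)) ^ n := by
  obtain ⟨j, rfl⟩ : ∃ j, m = j + 1 := ⟨m - 1, by omega⟩
  rw [Nat.add_sub_cancel, integral_one_sub_pow_mul_one_add_mul_pow, Finset.mul_sum]
  refine Finset.sum_congr rfl fun k _ => ?_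
  have hcoeff : ((n + (j + 1)).choose (k + (j + 1)) * (k + (j + 1))! * n ! : ℂ)
      = (n + (j + 1))! * n.choose k * k ! := by
    exact_mod_cast Nat.choose_add_mul_factorial_mul_factorial n (j + 1) k
  have hfac (i : ℕ) : (i ! : ℂ) ≠ 0 := Nat.cast_ne_zero.2 (Nat.factorial_ne_zero i)
  simp only [← add_assoc] at hcoeff ⊢
  field_simp [hfac]
  linear_combination z ^ k * hcoeff
end

section
/- Uniformly on compact subsets of the region {w ∈ ℂ : |1-w²| < 1 and Re(w) < 0}, the integrals G_n(w) := ∫_w^1 (1-x²)^n dx satisfy (√n/√π)·G_n(w) → 1 as n → ∞. -/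
/-!
Since `x ↦ (1 - x²)ⁿ` is entire, its segment integrals are path independent, so
`G n w = ∫_{-1}^{1} (1 - x²)ⁿ dx - ∫_{-1}^{w} (1 - x²)ⁿ dx`.
The substitution `x = cos θ` turns the first integral into `∫_0^π sin^{2n+1}`, and Wallis' product
gives `√n · ∫_{-1}^{1} (1 - x²)ⁿ dx → √π`. For `Re w ≤ 0` one has `|1 + w| ≤ |1 - w|`, hence
`|1 - z²| ≤ |1 - w²|` on the segment from `-1` to `w`, and the second integral is at most
`|w + 1| |1 - w²|ⁿ`. On a compact set where `|1 - w²| < 1` this decays geometrically, uniformly.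
-/

open MeasureTheory Filter Real

/-- Contour integral of `f` along the straight segment from `a` to `b`. -/
noncomputable def segInt (f : ℂ → ℂ) (a b : ℂ) : ℂ :=
  (b - a) * ∫ t in (0:ℝ)..1, f (a + (t : ℂ) * (b - a))

/-- `G n w = ∫_w^1 (1 - x²)^n dx`. -/
noncomputable def G (n : ℕ) (w : ℂ) : ℂ := segInt (fun x => (1 - x ^ 2) ^ n) w 1

open Finset Topology

theorem segInt_eq_sub_of_hasDerivAt {f F : ℂ → ℂ} (hF : ∀ x, HasDerivAt F (f x) x)
    (hf : Continuous f) (a b : ℂ) : segInt f a b = F b - F a := by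
  have hderiv : ∀ t : ℝ, HasDerivAt (fun s : ℝ => F (a + s * (b - a)))
      ((b - a) * f (a + t * (b - a))) t := by
    intro t
    have hline : HasDerivAt (fun z : ℂ => a + z * (b - a)) (b - a) t := by
      simpa using ((hasDerivAt_id (t : ℂ)).mul_const (b - a)).const_add a
    simpa [mul_comm] using ((hF _).comp (t : ℂ) hline).comp_ofReal
  rw [segInt, ← intervalIntegral.integral_const_mul,
    intervalIntegral.integral_eq_sub_of_hasDerivAt (fun t _ => hderiv t)
      (by apply Continuous.intervalIntegrable; fun_prop)]
  simp

theorem segInt_sub_segInt {f : ℂ → ℂ} (hf : Differentiable ℂ f) (a b c : ℂ) :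
    segInt f a c - segInt f a b = segInt f b c := by
  obtain ⟨F, hF⟩ := hf.isExactOn_univ
  have hF' : ∀ x, HasDerivAt F (f x) x := fun x => hF x (Set.mem_univ x)
  simp only [segInt_eq_sub_of_hasDerivAt hF' hf.continuous]
  ring

theorem segInt_ofReal (f : ℂ → ℂ) (a b : ℝ) : segInt f a b = ∫ x in a..b, f x := by
  have h := intervalIntegral.smul_integral_comp_mul_add (fun x : ℝ => f x) (b - a) a
    (a := 0) (b := 1)
  simp only [mul_zero, zero_add, mul_one, sub_add_cancel, Complex.real_smul] at h
  rw [segInt, ← h]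
  push_cast
  congr 1
  refine intervalIntegral.integral_congr fun t _ => ?_
  ring_nf

theorem integral_one_sub_sq_pow (n : ℕ) :
    ∫ x in (-1:ℝ)..1, (1 - x ^ 2) ^ n = 2 * ∏ i ∈ range n, (2 * (i : ℝ) + 2) / (2 * i + 3) := by
  have h := integral_sin_pow_odd_mul_cos_pow (a := 0) (b := π) n 0
  simp only [pow_zero, mul_one, one_mul, cos_pi, cos_zero] at h
  rw [← h, integral_sin_pow_odd]

theorem Real.Wallis.W_eq_mul_sq_prod (n : ℕ) :
    Wallis.W n = (2 * n + 1) * (∏ i ∈ range n, (2 * (i : ℝ) + 2) / (2 * i + 3)) ^ 2 := by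
  induction n with
  | zero => simp [Wallis.W]
  | succ n ih =>
    rw [Wallis.W_succ, ih, prod_range_succ]
    push_cast
    field_simp
    ring

theorem tendsto_sqrt_mul_integral_one_sub_sq_pow :
    Tendsto (fun n : ℕ => √n * ∫ x in (-1:ℝ)..1, (1 - x ^ 2) ^ n) atTop (𝓝 √π) := by
  have hratio : Tendsto (fun n : ℕ => 2 * ((n : ℝ) / (n + 1 / 2))) atTop (𝓝 (2 * 1)) :=
    (tendsto_natCast_div_add_atTop (1 / 2 : ℝ)).const_mul 2
  have hsq : Tendsto (fun n : ℕ => (n : ℝ) * (∫ x in (-1:ℝ)..1, (1 - x ^ 2) ^ n) ^ 2) atTop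
      (𝓝 π) := by
    convert (hratio.mul Wallis.tendsto_W_nhds_pi_div_two).congr (fun n => ?_) using 2
    · ring
    rw [Real.Wallis.W_eq_mul_sq_prod, integral_one_sub_sq_pow]
    field_simp
  refine ((continuous_sqrt.tendsto π).comp hsq).congr fun n => ?_
  have hnonneg : 0 ≤ ∫ x in (-1:ℝ)..1, (1 - x ^ 2) ^ n := by
    rw [integral_one_sub_sq_pow]; positivity
  simp [sqrt_mul (Nat.cast_nonneg n), sqrt_sq hnonneg]

theorem tendsto_sqrt_mul_pow_of_lt_one {r : ℝ} (h0 : 0 ≤ r) (h1 : r < 1) :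
    Tendsto (fun n : ℕ => √n * r ^ n) atTop (𝓝 0) := by
  have h := (continuous_sqrt.tendsto 0).comp
    (tendsto_self_mul_const_pow_of_lt_one (sq_nonneg r) (by nlinarith))
  rw [sqrt_zero] at h
  refine h.congr fun n => ?_
  rw [Function.comp_apply, sqrt_mul (Nat.cast_nonneg n), ← pow_mul, mul_comm 2 n, pow_mul,
    sqrt_sq (pow_nonneg h0 n)]

theorem IsCompact.exists_mem_Ico_forall_le {α : Type*} [TopologicalSpace α] {K : Set α}
    (hK : IsCompact K) {g : α → ℝ} (hg : ContinuousOn g K) {a b : ℝ} (hab : a < b)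
    (hlt : ∀ x ∈ K, g x < b) : ∃ c ∈ Set.Ico a b, ∀ x ∈ K, g x ≤ c := by
  rcases K.eq_empty_or_nonempty with rfl | hne
  · exact ⟨a, ⟨le_rfl, hab⟩, by simp⟩
  obtain ⟨x₀, hx₀, hmax⟩ := hK.exists_isMaxOn hne hg
  exact ⟨max a (g x₀), ⟨le_max_left _ _, max_lt hab (hlt x₀ hx₀)⟩,
    fun x hx => (hmax hx).trans (le_max_right _ _)⟩

theorem tendstoUniformlyOn_zero_of_norm_le {ι α E : Type*} [SeminormedAddCommGroup E]
    {l : Filter ι} {F : ι → α → E} {u : ι → ℝ} {s : Set α}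
    (hF : ∀ᶠ i in l, ∀ x ∈ s, ‖F i x‖ ≤ u i) (hu : Tendsto u l (𝓝 0)) :
    TendstoUniformlyOn F (fun _ => 0) l s := by
  rw [Metric.tendstoUniformlyOn_iff]
  intro ε hε
  filter_upwards [hF, hu.eventually (gt_mem_nhds hε)] with i hFi hui x hx
  simpa using (hFi x hx).trans_lt hui

theorem norm_segInt_le {f : ℂ → ℂ} {a b : ℂ} {C : ℝ}
    (hf : ∀ t ∈ Set.Icc (0:ℝ) 1, ‖f (a + t * (b - a))‖ ≤ C) :
    ‖segInt f a b‖ ≤ ‖b - a‖ * C := by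
  rw [segInt, norm_mul]
  refine mul_le_mul_of_nonneg_left ?_ (norm_nonneg _)
  have h := intervalIntegral.norm_integral_le_of_norm_le_const fun t ht =>
    hf t (Set.Ioc_subset_Icc_self (by rwa [Set.uIoc_of_le zero_le_one] at ht))
  simpa using h

theorem Complex.norm_one_add_le_norm_one_sub {w : ℂ} (hw : w.re ≤ 0) : ‖1 + w‖ ≤ ‖1 - w‖ := by
  rw [← sq_le_sq₀ (norm_nonneg _) (norm_nonneg _), Complex.sq_norm, Complex.sq_norm,
    Complex.normSq_apply, Complex.normSq_apply]
  simp only [Complex.add_re, Complex.sub_re, Complex.one_re, Complex.add_im, Complex.sub_im,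
    Complex.one_im]
  nlinarith

theorem norm_one_sub_sq_segment_le {w : ℂ} (hw : w.re ≤ 0) {s : ℝ} (hs : s ∈ Set.Icc (0:ℝ) 1) :
    ‖1 - (-1 + s * (w - -1)) ^ 2‖ ≤ ‖1 - w ^ 2‖ := by
  obtain ⟨hs0, hs1⟩ := hs
  have hsq : ‖w + 1‖ ^ 2 ≤ ‖1 - w ^ 2‖ := by
    rw [show (1 : ℂ) - w ^ 2 = (1 - w) * (1 + w) by ring, norm_mul, add_comm w, sq]
    exact mul_le_mul_of_nonneg_right (Complex.norm_one_add_le_norm_one_sub hw) (norm_nonneg _)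
  have hsplit : (1 : ℂ) - (-1 + s * (w - -1)) ^ 2
      = s * ((1 - w ^ 2) + ((1 - s : ℝ) : ℂ) * (w + 1) ^ 2) := by
    push_cast
    ring
  calc ‖1 - (-1 + s * (w - -1)) ^ 2‖
      = s * ‖(1 - w ^ 2) + ((1 - s : ℝ) : ℂ) * (w + 1) ^ 2‖ := by
        rw [hsplit, norm_mul, Complex.norm_of_nonneg hs0]
    _ ≤ s * (‖1 - w ^ 2‖ + (1 - s) * ‖w + 1‖ ^ 2) := by
        gcongr
        refine (norm_add_le _ _).trans_eq ?_
        rw [norm_mul, norm_pow, Complex.norm_of_nonneg (sub_nonneg.2 hs1)]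
    _ ≤ s * (2 - s) * ‖1 - w ^ 2‖ := by
        nlinarith [mul_nonneg (mul_nonneg hs0 (sub_nonneg.2 hs1)) (sub_nonneg.2 hsq)]
    _ ≤ ‖1 - w ^ 2‖ := by nlinarith [mul_nonneg (sq_nonneg (1 - s)) (norm_nonneg (1 - w ^ 2))]

theorem norm_segInt_neg_one_le (n : ℕ) {w : ℂ} (hw : w.re ≤ 0) :
    ‖segInt (fun x => (1 - x ^ 2) ^ n) (-1) w‖ ≤ ‖w + 1‖ * ‖1 - w ^ 2‖ ^ n := by
  have h := norm_segInt_le (f := fun x => (1 - x ^ 2) ^ n) (a := -1) (b := w)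
    (C := ‖1 - w ^ 2‖ ^ n) fun s hs => by
      rw [norm_pow]
      exact pow_le_pow_left₀ (norm_nonneg _) (norm_one_sub_sq_segment_le hw hs) n
  simpa using h

theorem G_eq_integral_sub_segInt (n : ℕ) (w : ℂ) :
    G n w = ((∫ x in (-1:ℝ)..1, (1 - x ^ 2) ^ n : ℝ) : ℂ)
      - segInt (fun x => (1 - x ^ 2) ^ n) (-1) w := by
  have hdiff : Differentiable ℂ fun x : ℂ => (1 - x ^ 2) ^ n := by fun_prop
  rw [G, ← segInt_sub_segInt hdiff (-1), ← intervalIntegral.integral_ofReal]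
  simpa using segInt_ofReal (fun x => (1 - x ^ 2) ^ n) (-1) 1

theorem tendstoUniformlyOn_sqrt_mul_segInt_neg_one {K : Set ℂ} (hK : IsCompact K)
    (hKsub : ∀ w ∈ K, ‖1 - w ^ 2‖ < 1 ∧ w.re ≤ 0) :
    TendstoUniformlyOn (fun (n : ℕ) (w : ℂ) =>
      ((√n / √π : ℝ) : ℂ) * segInt (fun x => (1 - x ^ 2) ^ n) (-1) w) (fun _ => 0) atTop K := by
  obtain ⟨c, ⟨hc0, hc1⟩, hcK⟩ := hK.exists_mem_Ico_forall_le (g := fun w => ‖1 - w ^ 2‖)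
    (by fun_prop) zero_lt_one fun w hw => (hKsub w hw).1
  obtain ⟨M, hM⟩ := hK.exists_bound_of_continuousOn (f := fun w => w + 1) (by fun_prop)
  refine tendstoUniformlyOn_zero_of_norm_le (u := fun n : ℕ => M / √π * (√n * c ^ n))
    (Eventually.of_forall fun n w hw => ?_) ?_
  · have hR : ‖segInt (fun x => (1 - x ^ 2) ^ n) (-1) w‖ ≤ M * c ^ n :=
      (norm_segInt_neg_one_le n (hKsub w hw).2).trans <| mul_le_mul (hM w hw)
        (pow_le_pow_left₀ (norm_nonneg _) (hcK w hw) n) (by positivity)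
        ((norm_nonneg _).trans (hM w hw))
    calc ‖((√n / √π : ℝ) : ℂ) * segInt (fun x => (1 - x ^ 2) ^ n) (-1) w‖
        = √n / √π * ‖segInt (fun x => (1 - x ^ 2) ^ n) (-1) w‖ := by
          rw [norm_mul, Complex.norm_of_nonneg (by positivity)]
      _ ≤ √n / √π * (M * c ^ n) := by gcongr
      _ = M / √π * (√n * c ^ n) := by ring
  · simpa using (tendsto_sqrt_mul_pow_of_lt_one hc0 hc1).const_mul (M / √π)

theorem stmt11 (K : Set ℂ) (hK : IsCompact K)
    (hKsub : K ⊆ {w : ℂ | ‖1 - w ^ 2‖ < 1 ∧ w.re < 0}) :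
    TendstoUniformlyOn
      (fun (n : ℕ) (w : ℂ) => ((Real.sqrt n / Real.sqrt π : ℝ) : ℂ) * G n w)
      (fun _ => 1) atTop K := by
  have hmain : Tendsto (fun n : ℕ => ((√n / √π : ℝ) : ℂ) *
      ((∫ x in (-1:ℝ)..1, (1 - x ^ 2) ^ n : ℝ) : ℂ)) atTop (𝓝 1) := by
    have h := (tendsto_sqrt_mul_integral_one_sub_sq_pow.div_const √π).ofReal
    rw [div_self (sqrt_pos.2 pi_pos).ne', Complex.ofReal_one] at h
    refine h.congr fun n => ?_
    push_cast
    ring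
  have hrem := tendstoUniformlyOn_sqrt_mul_segInt_neg_one hK
    fun w hw => ⟨(hKsub hw).1, (hKsub hw).2.le⟩
  simpa [G_eq_integral_sub_segInt, mul_sub] using (hmain.tendstoUniformlyOn_const K).fun_sub hrem
end

section
/- Uniformly on compact subsets of E₁ := {z ∈ ℂ : |(z+1)²/(4z)| > 1 and |z| > 1}, the polynomials Q_{n,n}(z) = Σ_{k=0}^n C(2n, k+n) z^k satisfy Q_{n,n}(z)·z^n/(z+1)^{2n} → 1 as n → ∞. -/
/-!
By the binomial theorem, `(z + 1) ^ (2n)` splits into the terms `C(2n, i) z^i` with `i < n` and the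
remaining terms, which add up to `z^n Q_{n,n}(z)`. For `‖z‖ ≥ 1` the first part has norm at most
`4^n ‖z‖^n`, so `‖1 - Q_{n,n}(z) z^n / (z + 1)^(2n)‖ ≤ ‖4z / (z + 1)^2‖^n`. On `E₁` the ratio
`‖4z / (z + 1)^2‖` is below `1`, and on a compact subset it attains its maximum, which is therefore
a uniform geometric rate.
-/

open Filter

/-- Borwein–Chen–Dilcher polynomial `Q_{n,n}`. -/
noncomputable def Qnn (n : ℕ) (z : ℂ) : ℂ :=
  ∑ k ∈ Finset.range (n + 1), ((2 * n).choose (k + n) : ℂ) * z ^ k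

theorem tendstoUniformlyOn_of_dist_le_pow {α β : Type*} [TopologicalSpace α]
    [PseudoMetricSpace β] {F : ℕ → α → β} {f : α → β} {r : α → ℝ} {K : Set α}
    (hK : IsCompact K) (hr : ContinuousOn r K) (hr₀ : ∀ x ∈ K, 0 ≤ r x)
    (hr₁ : ∀ x ∈ K, r x < 1) (hF : ∀ n, ∀ x ∈ K, dist (f x) (F n x) ≤ r x ^ n) :
    TendstoUniformlyOn F f atTop K := by
  rcases K.eq_empty_or_nonempty with rfl | hKne
  · exact tendstoUniformlyOn_empty
  obtain ⟨x₀, hx₀, hmax⟩ := hK.exists_isMaxOn hKne hr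
  have hpow : Tendsto (fun n ↦ r x₀ ^ n) atTop (nhds 0) :=
    tendsto_pow_atTop_nhds_zero_of_lt_one (hr₀ x₀ hx₀) (hr₁ x₀ hx₀)
  rw [Metric.tendstoUniformlyOn_iff]
  intro ε hε
  filter_upwards [hpow.eventually (gt_mem_nhds hε)] with n hn x hx
  calc dist (f x) (F n x) ≤ r x ^ n := hF n x hx
    _ ≤ r x₀ ^ n := pow_le_pow_left₀ (hr₀ x hx) (hmax hx) n
    _ < ε := hn

theorem sum_choose_mul_pow_add_Qnn_mul_pow (n : ℕ) (z : ℂ) :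
    ∑ i ∈ Finset.range n, ((2 * n).choose i : ℂ) * z ^ i + Qnn n z * z ^ n
      = (z + 1) ^ (2 * n) := by
  rw [add_pow, show 2 * n + 1 = n + (n + 1) by ring, Finset.sum_range_add, Qnn, Finset.sum_mul]
  congr 1 <;> refine Finset.sum_congr rfl fun i _ ↦ ?_
  · ring
  · rw [add_comm n i, pow_add]
    ring

theorem sum_range_choose_two_mul_le (n : ℕ) :
    ∑ i ∈ Finset.range n, ((2 * n).choose i : ℝ) ≤ 4 ^ n := calc
  ∑ i ∈ Finset.range n, ((2 * n).choose i : ℝ)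
      ≤ ∑ i ∈ Finset.range (2 * n + 1), ((2 * n).choose i : ℝ) :=
    Finset.sum_le_sum_of_subset_of_nonneg (Finset.range_subset_range.mpr (by omega))
      fun _ _ _ ↦ by positivity
  _ = 4 ^ n := by
    rw [← Nat.cast_sum, Nat.sum_range_choose, pow_mul]
    norm_num

theorem norm_sum_range_choose_mul_pow_le {z : ℂ} (hz : 1 ≤ ‖z‖) (n : ℕ) :
    ‖∑ i ∈ Finset.range n, ((2 * n).choose i : ℂ) * z ^ i‖ ≤ (4 * ‖z‖) ^ n := calc
  ‖∑ i ∈ Finset.range n, ((2 * n).choose i : ℂ) * z ^ i‖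
      ≤ ∑ i ∈ Finset.range n, ((2 * n).choose i : ℝ) * ‖z‖ ^ n := by
    refine (norm_sum_le _ _).trans (Finset.sum_le_sum fun i hi ↦ ?_)
    rw [norm_mul, norm_pow, Complex.norm_natCast]
    gcongr
    exact (Finset.mem_range.mp hi).le
  _ ≤ 4 ^ n * ‖z‖ ^ n := by
    rw [← Finset.sum_mul]
    gcongr
    exact sum_range_choose_two_mul_le n
  _ = (4 * ‖z‖) ^ n := (mul_pow _ _ _).symm

theorem norm_one_sub_Qnn_mul_pow_div_le {z : ℂ} (hz : 1 ≤ ‖z‖) (hz₁ : z + 1 ≠ 0) (n : ℕ) :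
    ‖1 - Qnn n z * z ^ n / (z + 1) ^ (2 * n)‖ ≤ ‖4 * z / (z + 1) ^ 2‖ ^ n := by
  have hpow : (z + 1) ^ (2 * n) ≠ 0 := pow_ne_zero _ hz₁
  rw [one_sub_div hpow, ← eq_sub_of_add_eq (sum_choose_mul_pow_add_Qnn_mul_pow n z), norm_div, div_le_iff₀ (norm_pos_iff.mpr hpow)]
  calc _ ≤ (4 * ‖z‖) ^ n := norm_sum_range_choose_mul_pow_le hz n
    _ = ‖4 * z / (z + 1) ^ 2‖ ^ n * ‖(z + 1) ^ (2 * n)‖ := by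
      rw [← norm_pow, ← norm_mul, pow_mul, ← mul_pow, div_mul_cancel₀ _ (pow_ne_zero 2 hz₁),
        norm_pow, norm_mul, Complex.norm_ofNat]

theorem stmt12 (K : Set ℂ) (hK : IsCompact K)
    (hKsub : K ⊆ {z : ℂ | 1 < ‖(z + 1) ^ 2 / (4 * z)‖ ∧ 1 < ‖z‖}) :
    TendstoUniformlyOn
      (fun (n : ℕ) (z : ℂ) => Qnn n z * z ^ n / (z + 1) ^ (2 * n))
      (fun _ => 1) atTop K := by
  have hne : ∀ z ∈ K, z + 1 ≠ 0 := fun z hz h ↦ by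
    have := (hKsub hz).1
    norm_num [h] at this
  refine tendstoUniformlyOn_of_dist_le_pow (r := fun z ↦ ‖4 * z / (z + 1) ^ 2‖) hK ?_
    (fun _ _ ↦ norm_nonneg _) (fun z hz ↦ ?_) fun n z hz ↦ ?_
  · exact (ContinuousOn.div (by fun_prop) (by fun_prop) fun z hz ↦ pow_ne_zero _ (hne z hz)).norm
  · rw [← inv_div, norm_inv]
    exact inv_lt_one_of_one_lt₀ (hKsub hz).1
  · rw [Complex.dist_eq]
    exact norm_one_sub_Qnn_mul_pow_div_le (hKsub hz).2.le (hne z hz) n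
end

section
/- Uniformly on compact subsets of E₂ := {z ∈ ℂ : |(z+1)²/(4z)| < 1} ∪ {z ∈ ℂ : |(z+1)²/(4z)| > 1 and |z| < 1}, the polynomials Q_{n,n}(z) = Σ_{k=0}^n C(2n, k+n) z^k satisfy Q_{n,n}(z)·√(πn)·(1-z)/2^{2n} → 1 as n → ∞. -/
/-!
Multiplying by `1 - z` telescopes `Q_{n,n}`: `(1 - z) Q_{n,n}(z) = C(2n,n) - z ∑_{k ≤ n} d_k z^k`
with `d_k = C(2n,n+k) - C(2n,n+k+1) ≥ 0`. By Wallis' product `√(πn) C(2n,n) / 4^n → 1`, so on the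
closed unit disc away from `z = 1` it suffices that the sum is `o(4^n / √n)`. The `d_k` are
unimodal with peak `O(C(2n,n) / √n)` (at `k ≈ √(n/2)`), and since the total variation of a
unimodal sequence is twice its peak, a second summation by parts bounds `|1 - z| |∑ d_k z^k|`
by twice that peak.

For `|z| ≥ 1`, the reflection `z^n (Q_{n,n}(z) + Q_{n,n}(1/z)) = (1 + z)^{2n} + C(2n,n) z^n`
reduces the claim to the point `1/z` of the disc plus a multiple of `√n ((z+1)² / (4z))^n`,
which decays geometrically where `|(z+1)² / (4z)| < 1`.
-/

open Filter Real

open Finset Topology Metric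

theorem one_sub_mul_sum_range_mul_pow {R : Type*} [CommRing R] (b : ℕ → R) (z : R) (N : ℕ) :
    (1 - z) * ∑ k ∈ range N, b k * z ^ k
      = b 0 - b N * z ^ N - z * ∑ k ∈ range N, (b k - b (k + 1)) * z ^ k := by
  have h := sum_range_sub' (fun k => b k * z ^ k) N
  simp only [pow_zero, mul_one] at h
  rw [← h, mul_sum, mul_sum, ← sum_sub_distrib]
  exact sum_congr rfl fun k _ => by ring

theorem sum_range_abs_sub_add_eq_of_unimodal (a : ℕ → ℝ) (s : ℕ)
    (hup : ∀ k < s, a k ≤ a (k + 1)) (hdown : ∀ k, s ≤ k → a (k + 1) ≤ a k) (N : ℕ) :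
    ∑ k ∈ range N, |a k - a (k + 1)| + a 0 + a N = 2 * a (min s N) := by
  induction N with
  | zero => simp; ring
  | succ N ih =>
    rw [sum_range_succ]
    rcases lt_or_ge N s with hN | hN
    · rw [min_eq_right hN.le] at ih
      rw [min_eq_right (by omega), abs_of_nonpos (sub_nonpos.2 (hup N hN))]
      linarith
    · rw [min_eq_left hN] at ih
      rw [min_eq_left (by omega), abs_of_nonneg (sub_nonneg.2 (hdown N hN))]
      linarith

theorem norm_sum_range_mul_pow_le_of_unimodal (a : ℕ → ℝ) (s N : ℕ) (hsN : s ≤ N)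
    (hnonneg : ∀ k, 0 ≤ a k) (hup : ∀ k < s, a k ≤ a (k + 1))
    (hdown : ∀ k, s ≤ k → a (k + 1) ≤ a k) {z : ℂ} (hz : ‖z‖ ≤ 1) :
    ‖1 - z‖ * ‖∑ k ∈ range N, (a k : ℂ) * z ^ k‖ ≤ 2 * a s := by
  have hpow : ∀ k, ‖z ^ k‖ ≤ 1 := fun k => by rw [norm_pow]; exact pow_le_one₀ (norm_nonneg z) hz
  have htv := sum_range_abs_sub_add_eq_of_unimodal a s hup hdown N
  rw [min_eq_left hsN] at htv
  rw [← norm_mul, one_sub_mul_sum_range_mul_pow]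
  calc _ ≤ ‖(a 0 : ℂ)‖ + ‖(a N : ℂ) * z ^ N‖
        + ‖z * ∑ k ∈ range N, ((a k : ℂ) - a (k + 1)) * z ^ k‖ :=
          (norm_sub_le _ _).trans (add_le_add_left (norm_sub_le _ _) _)
    _ ≤ a 0 + a N + ∑ k ∈ range N, |a k - a (k + 1)| := by
      gcongr
      · rw [Complex.norm_real, Real.norm_of_nonneg (hnonneg 0)]
      · rw [norm_mul, Complex.norm_real, Real.norm_of_nonneg (hnonneg N)]
        exact mul_le_of_le_one_right (hnonneg N) (hpow N)
      · rw [norm_mul]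
        refine (mul_le_of_le_one_left (norm_nonneg _) hz).trans ((norm_sum_le _ _).trans ?_)
        refine sum_le_sum fun k _ => ?_
        rw [norm_mul, ← Complex.ofReal_sub, Complex.norm_real, Real.norm_eq_abs]
        exact mul_le_of_le_one_right (abs_nonneg _) (hpow k)
    _ = 2 * a s := by linarith

theorem tendstoUniformlyOn_of_norm_sub_le {ι α E : Type*} [SeminormedAddCommGroup E]
    {p : Filter ι} {F : ι → α → E} {f : α → E} {s : Set α} {b : ι → ℝ}
    (hb : Tendsto b p (𝓝 0)) (h : ∀ᶠ n in p, ∀ x ∈ s, ‖F n x - f x‖ ≤ b n) :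
    TendstoUniformlyOn F f p s := by
  rw [Metric.tendstoUniformlyOn_iff]
  intro ε hε
  filter_upwards [h, hb.eventually_lt_const hε] with n hn hbn x hx
  rw [dist_comm, dist_eq_norm]
  exact (hn x hx).trans_lt hbn

theorem TendstoUniformlyOn.mul_left_of_norm_le {ι α 𝕜 : Type*} [SeminormedRing 𝕜]
    {p : Filter ι} {F : ι → α → 𝕜} {f : α → 𝕜} {s : Set α} (hF : TendstoUniformlyOn F f p s)
    {g : α → 𝕜} {R : ℝ} (hg : ∀ x ∈ s, ‖g x‖ ≤ R) :
    TendstoUniformlyOn (fun n x => g x * F n x) (fun x => g x * f x) p s := by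
  rw [Metric.tendstoUniformlyOn_iff] at hF ⊢
  intro ε hε
  have hR : 0 < |R| + 1 := by positivity
  filter_upwards [hF (ε / (|R| + 1)) (div_pos hε hR)] with n hn x hx
  rw [dist_eq_norm, ← mul_sub]
  calc ‖g x * (f x - F n x)‖ ≤ ‖g x‖ * ‖f x - F n x‖ := norm_mul_le _ _
    _ ≤ (|R| + 1) * ‖f x - F n x‖ := by
      gcongr; exact (hg x hx).trans ((le_abs_self R).trans (le_add_of_nonneg_right zero_le_one))
    _ < (|R| + 1) * (ε / (|R| + 1)) := by gcongr; rw [← dist_eq_norm]; exact hn x hx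
    _ = ε := by field_simp

theorem TendstoUniformlyOn.union {ι α β : Type*} [UniformSpace β] {p : Filter ι}
    {F : ι → α → β} {f : α → β} {s t : Set α} (hs : TendstoUniformlyOn F f p s)
    (ht : TendstoUniformlyOn F f p t) : TendstoUniformlyOn F f p (s ∪ t) := fun u hu =>
  ((hs u hu).and (ht u hu)).mono fun _ hn x hx => hx.elim (hn.1 x) (hn.2 x)

theorem IsCompact.exists_lt_forall_le_of_forall_lt {α β : Type*} [TopologicalSpace α]
    [LinearOrder β] [TopologicalSpace β] [OrderClosedTopology β] [NoMinOrder β]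
    {K : Set α} (hK : IsCompact K) {f : α → β} (hf : ContinuousOn f K) {a : β}
    (h : ∀ x ∈ K, f x < a) : ∃ b < a, ∀ x ∈ K, f x ≤ b := by
  rcases K.eq_empty_or_nonempty with rfl | hne
  · obtain ⟨b, hb⟩ := exists_lt a
    exact ⟨b, hb, by simp⟩
  obtain ⟨x, hx, hmax⟩ := hK.exists_isMaxOn hne hf
  exact ⟨f x, h x hx, fun y hy => hmax hy⟩

theorem wallis_mul_centralBinom_sq (n : ℕ) :
    Wallis.W n * (2 * n + 1) * (n.centralBinom : ℝ) ^ 2 = 16 ^ n := by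
  have hfact : (n.centralBinom : ℝ) * (n.factorial * n.factorial) = (2 * n).factorial := by
    have := Nat.choose_mul_factorial_mul_factorial (show n ≤ 2 * n by omega)
    rw [show 2 * n - n = n by omega, ← Nat.centralBinom_eq_two_mul_choose, mul_assoc] at this
    exact_mod_cast this
  have hC : (n.centralBinom : ℝ) ≠ 0 := by exact_mod_cast n.centralBinom_ne_zero
  rw [Wallis.W_eq_factorial_ratio, ← hfact,
    show (2 : ℝ) ^ (4 * n) = 16 ^ n by rw [pow_mul]; norm_num]
  field_simp

noncomputable def normalizedCentralBinom (n : ℕ) : ℝ := √(π * n) * n.centralBinom / 4 ^ n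

theorem normalizedCentralBinom_sq (n : ℕ) :
    normalizedCentralBinom n ^ 2 = π / Wallis.W n * (n / (2 * n + 1)) := by
  have hW := Wallis.W_pos n
  have hC : (n.centralBinom : ℝ) ≠ 0 := by exact_mod_cast n.centralBinom_ne_zero
  rw [normalizedCentralBinom, div_pow, mul_pow, Real.sq_sqrt (by positivity),
    ← pow_mul, mul_comm n 2, pow_mul, show (4 : ℝ) ^ 2 = 16 by norm_num,
    ← wallis_mul_centralBinom_sq n]
  field_simp

theorem tendsto_normalizedCentralBinom : Tendsto normalizedCentralBinom atTop (𝓝 1) := by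
  have hsq : Tendsto (fun n => normalizedCentralBinom n ^ 2) atTop (𝓝 1) := by
    have h := (tendsto_const_nhds (x := π)).div Wallis.tendsto_W_nhds_pi_div_two
      (by positivity) |>.mul Stirling.tendsto_self_div_two_mul_self_add_one
    rw [show π / (π / 2) * (1 / 2) = 1 by field_simp] at h
    exact h.congr fun n => (normalizedCentralBinom_sq n).symm
  have h := hsq.sqrt
  rw [Real.sqrt_one] at h
  refine h.congr fun n => Real.sqrt_sq ?_
  rw [normalizedCentralBinom]
  positivity

theorem tendsto_centralBinom_div_four_pow :
    Tendsto (fun n : ℕ => (n.centralBinom : ℝ) / 4 ^ n) atTop (𝓝 0) := by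
  have h := tendsto_normalizedCentralBinom.div_atTop
    (Real.tendsto_sqrt_atTop.comp (tendsto_natCast_atTop_atTop.const_mul_atTop pi_pos))
  refine h.congr' ?_
  filter_upwards [eventually_ge_atTop 1] with n hn
  have : 0 < √(π * n) := Real.sqrt_pos.2 (by positivity)
  simp only [Function.comp_apply, normalizedCentralBinom]
  field_simp

theorem tendsto_sqrt_pi_mul_mul_pow {ρ : ℝ} (hρ0 : 0 ≤ ρ) (hρ1 : ρ < 1) :
    Tendsto (fun n : ℕ => √(π * n) * ρ ^ n) atTop (𝓝 0) := by
  have h := (tendsto_pow_const_mul_const_pow_of_abs_lt_one 1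
    (by rwa [abs_of_nonneg hρ0])).const_mul √π
  rw [mul_zero] at h
  refine squeeze_zero (fun n => by positivity) (fun n => ?_) h
  rw [Real.sqrt_mul pi_pos.le, pow_one, mul_assoc]
  gcongr
  exact Real.sqrt_le_self_iff.2 (by rcases n with _ | n <;> simp)

noncomputable def binomDiff (n k : ℕ) : ℝ :=
  ((2 * n).choose (k + n) : ℝ) - (2 * n).choose (k + 1 + n)

theorem choose_two_mul_succ_add_mul (n k : ℕ) :
    (2 * n).choose (k + 1 + n) * (n + k + 1) = (2 * n).choose (k + n) * (n - k) := by
  rw [show k + 1 + n = k + n + 1 by omega, show n + k + 1 = k + n + 1 by omega,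
    Nat.choose_succ_right_eq, show 2 * n - (k + n) = n - k by omega]

theorem cast_choose_two_mul_succ_add_mul (n k : ℕ) (hk : k ≤ n) :
    ((2 * n).choose (k + 1 + n) : ℝ) * (n + k + 1) = (2 * n).choose (k + n) * (n - k) := by
  exact_mod_cast choose_two_mul_succ_add_mul n k

theorem binomDiff_nonneg (n k : ℕ) : 0 ≤ binomDiff n k := by
  have h : (2 * n).choose (k + 1 + n) ≤ (2 * n).choose (k + n) :=
    Nat.le_of_mul_le_mul_right ((choose_two_mul_succ_add_mul n k).trans_le
      (Nat.mul_le_mul_left _ (by omega))) (by omega : 0 < n + k + 1)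
  rw [binomDiff, sub_nonneg]
  exact_mod_cast h

theorem binomDiff_eq_zero {n k : ℕ} (hk : n < k) : binomDiff n k = 0 := by
  simp [binomDiff, Nat.choose_eq_zero_of_lt, show 2 * n < k + n by omega,
    show 2 * n < k + 1 + n by omega]

theorem binomDiff_mul (n k : ℕ) (hk : k ≤ n) :
    binomDiff n k * (n + k + 1) = (2 * n).choose (k + n) * (2 * k + 1) := by
  rw [binomDiff]
  linear_combination -cast_choose_two_mul_succ_add_mul n k hk

theorem binomDiff_succ_sub (n k : ℕ) (hk : k + 1 ≤ n) :
    ((n + k + 1) * (n + k + 2) : ℝ) * (binomDiff n (k + 1) - binomDiff n k)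
      = 2 * (2 * n).choose (k + n) * (n + 1 - 2 * (k + 1) ^ 2) := by
  have h₀ := cast_choose_two_mul_succ_add_mul n k (by omega)
  have h₁ := cast_choose_two_mul_succ_add_mul n (k + 1) hk
  rw [show k + 1 + 1 + n = k + 2 + n by omega] at h₁
  push_cast at h₁
  rw [binomDiff, binomDiff, show k + 1 + 1 + n = k + 2 + n by omega]
  linear_combination (-((n : ℝ) + k + 1)) * h₁ + (2 * ((n : ℝ) + k + 2) - ((n : ℝ) - k - 1)) * h₀

theorem binomDiff_le_succ {n k : ℕ} (hk : k < Nat.sqrt ((n + 1) / 2)) :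
    binomDiff n k ≤ binomDiff n (k + 1) := by
  have hk2 : (k + 1) * (k + 1) ≤ (n + 1) / 2 := Nat.le_sqrt.mp hk
  have hkn : 2 * (k + 1) ^ 2 ≤ n + 1 := by nlinarith [Nat.div_mul_le_self (n + 1) 2]
  have hstep := binomDiff_succ_sub n k (by nlinarith)
  have hsign : (0 : ℝ) ≤ n + 1 - 2 * (k + 1) ^ 2 := by
    rw [sub_nonneg]; exact_mod_cast hkn
  have hpos : (0 : ℝ) < (n + k + 1) * (n + k + 2) := by positivity
  nlinarith [(Nat.cast_nonneg ((2 * n).choose (k + n)) : (0 : ℝ) ≤ _)]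

theorem binomDiff_succ_le {n k : ℕ} (hk : Nat.sqrt ((n + 1) / 2) ≤ k) :
    binomDiff n (k + 1) ≤ binomDiff n k := by
  rcases lt_or_ge n (k + 1) with hn | hn
  · rw [binomDiff_eq_zero hn]; exact binomDiff_nonneg n k
  have hk2 : (n + 1) / 2 < (k + 1) * (k + 1) := Nat.sqrt_lt.mp (by omega)
  have hkn : n + 1 < 2 * (k + 1) ^ 2 := by rw [sq]; omega
  have hstep := binomDiff_succ_sub n k hn
  have hsign : (n + 1 - 2 * (k + 1) ^ 2 : ℝ) ≤ 0 := by
    rw [sub_nonpos]; exact_mod_cast hkn.le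
  have hpos : (0 : ℝ) < (n + k + 1) * (n + k + 2) := by positivity
  nlinarith [(Nat.cast_nonneg ((2 * n).choose (k + n)) : (0 : ℝ) ≤ _)]

theorem binomDiff_mul_sqrt_le {n k : ℕ} (hk : k ≤ Nat.sqrt n) :
    binomDiff n k * √n ≤ 3 * n.centralBinom := by
  have hkn : k ≤ n := hk.trans (Nat.sqrt_le_self n)
  have hks : (k : ℝ) ≤ √n := (Nat.cast_le.2 hk).trans Real.nat_sqrt_le_real_sqrt
  have hsq : √n * √n = n := Real.mul_self_sqrt (Nat.cast_nonneg n)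
  have hchoose : ((2 * n).choose (k + n) : ℝ) ≤ n.centralBinom := by
    exact_mod_cast Nat.choose_le_centralBinom (k + n) n
  have hnk : (0 : ℝ) < n + k + 1 := by positivity
  have hfactor : (2 * k + 1 : ℝ) * √n ≤ 3 * (n + k + 1) := by
    nlinarith [Real.sqrt_nonneg n]
  refine le_of_mul_le_mul_right ?_ hnk
  calc binomDiff n k * √n * (n + k + 1) = (2 * n).choose (k + n) * ((2 * k + 1) * √n) := by
        rw [mul_right_comm, binomDiff_mul n k hkn, mul_assoc]
    _ ≤ n.centralBinom * (3 * (n + k + 1)) := by gcongr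
    _ = 3 * n.centralBinom * (n + k + 1) := by ring

theorem one_sub_mul_Qnn (n : ℕ) (z : ℂ) :
    (1 - z) * Qnn n z
      = n.centralBinom - z * ∑ k ∈ range (n + 1), (binomDiff n k : ℂ) * z ^ k := by
  rw [Qnn, one_sub_mul_sum_range_mul_pow, Nat.choose_eq_zero_of_lt (by omega : 2 * n < n + 1 + n)]
  simp [binomDiff, Nat.centralBinom_eq_two_mul_choose]

theorem pow_mul_Qnn (n : ℕ) (z : ℂ) :
    z ^ n * Qnn n z = ∑ k ∈ range (n + 1), ((2 * n).choose (n + k) : ℂ) * z ^ (n + k) := by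
  rw [Qnn, mul_sum]
  exact sum_congr rfl fun k _ => by rw [add_comm k n, pow_add]; ring

theorem pow_mul_Qnn_inv (n : ℕ) {z : ℂ} (hz : z ≠ 0) :
    z ^ n * Qnn n z⁻¹ = ∑ k ∈ range (n + 1), ((2 * n).choose k : ℂ) * z ^ k := by
  rw [Qnn, mul_sum, ← sum_range_reflect]
  refine sum_congr rfl fun k hk => ?_
  have hk : k ≤ n := Nat.lt_succ_iff.1 (mem_range.1 hk)
  rw [show n + 1 - 1 - k + n = 2 * n - k by omega, Nat.choose_symm (by omega),
    show n + 1 - 1 - k = n - k by omega, inv_pow, pow_sub₀ z hz hk]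
  field_simp

theorem pow_mul_Qnn_add_Qnn_inv (n : ℕ) {z : ℂ} (hz : z ≠ 0) :
    z ^ n * (Qnn n z + Qnn n z⁻¹) = (1 + z) ^ (2 * n) + n.centralBinom * z ^ n := by
  have hbinom : (1 + z) ^ (2 * n) = ∑ i ∈ range (n + (n + 1)), ((2 * n).choose i : ℂ) * z ^ i := by
    rw [add_comm 1 z, add_pow, show n + (n + 1) = 2 * n + 1 by omega]
    exact sum_congr rfl fun i _ => by ring
  rw [mul_add, pow_mul_Qnn, pow_mul_Qnn_inv n hz, hbinom,
    sum_range_add (fun i => ((2 * n).choose i : ℂ) * z ^ i) n (n + 1),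
    sum_range_succ (fun k => ((2 * n).choose k : ℂ) * z ^ k), Nat.centralBinom_eq_two_mul_choose]
  ring

noncomputable def scaledQnn (n : ℕ) (z : ℂ) : ℂ :=
  Qnn n z * ((√(π * n) : ℝ) : ℂ) * (1 - z) / 2 ^ (2 * n)

theorem scaledQnn_sub_one (n : ℕ) (z : ℂ) :
    scaledQnn n z - 1 = ((normalizedCentralBinom n - 1 : ℝ) : ℂ)
      - ((√(π * n) / 4 ^ n : ℝ) : ℂ) * z * ∑ k ∈ range (n + 1), (binomDiff n k : ℂ) * z ^ k := by
  have h4 : (2 : ℂ) ^ (2 * n) = 4 ^ n := by rw [pow_mul]; norm_num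
  rw [scaledQnn, mul_right_comm, mul_comm (Qnn n z), one_sub_mul_Qnn, h4, normalizedCentralBinom]
  push_cast
  field_simp
  ring

theorem norm_scaledQnn_sub_one_le (n : ℕ) {z : ℂ} (hz : ‖z‖ ≤ 1) (hz1 : z ≠ 1) :
    ‖scaledQnn n z - 1‖
      ≤ |normalizedCentralBinom n - 1| + 6 * √π * (n.centralBinom / 4 ^ n) / ‖1 - z‖ := by
  set s := Nat.sqrt ((n + 1) / 2)
  have hs : s ≤ Nat.sqrt n := Nat.sqrt_le_sqrt (by omega)
  have hδ : 0 < ‖1 - z‖ := norm_pos_iff.2 (sub_ne_zero.2 hz1.symm)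
  have habel := norm_sum_range_mul_pow_le_of_unimodal (binomDiff n) s (n + 1)
    (by have := Nat.sqrt_le_self n; omega) (binomDiff_nonneg n) (fun k hk => binomDiff_le_succ hk)
    (fun k hk => binomDiff_succ_le hk) hz
  set S := ∑ k ∈ range (n + 1), (binomDiff n k : ℂ) * z ^ k
  calc ‖scaledQnn n z - 1‖
      ≤ |normalizedCentralBinom n - 1| + √(π * n) / 4 ^ n * ‖S‖ := by
        rw [scaledQnn_sub_one]
        refine (norm_sub_le _ _).trans (add_le_add (by rw [Complex.norm_real, Real.norm_eq_abs]) ?_)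
        rw [norm_mul, norm_mul, Complex.norm_real, Real.norm_of_nonneg (by positivity)]
        exact mul_le_mul_of_nonneg_right (mul_le_of_le_one_right (by positivity) hz) (norm_nonneg _)
    _ ≤ |normalizedCentralBinom n - 1| + 6 * √π * (n.centralBinom / 4 ^ n) / ‖1 - z‖ := by
        gcongr
        rw [le_div_iff₀ hδ]
        calc √(π * n) / 4 ^ n * ‖S‖ * ‖1 - z‖ = √(π * n) / 4 ^ n * (‖1 - z‖ * ‖S‖) := by ring
          _ ≤ √(π * n) / 4 ^ n * (2 * binomDiff n s) := by gcongr
          _ = 2 * √π * (binomDiff n s * √n) / 4 ^ n := by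
            rw [Real.sqrt_mul pi_pos.le]; ring
          _ ≤ 2 * √π * (3 * n.centralBinom) / 4 ^ n := by
            gcongr 2 * √π * ?_ / _
            exact binomDiff_mul_sqrt_le hs
          _ = 6 * √π * (n.centralBinom / 4 ^ n) := by ring

theorem scaledQnn_eq_add_scaledQnn_inv (n : ℕ) {z : ℂ} (hz : z ≠ 0) :
    scaledQnn n z = (1 - z) * (((√(π * n) : ℝ) : ℂ) * ((z + 1) ^ 2 / (4 * z)) ^ n)
      + (1 - z) * (normalizedCentralBinom n : ℂ) + z * scaledQnn n z⁻¹ := by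
  have hrefl := pow_mul_Qnn_add_Qnn_inv n hz
  have hQ : Qnn n z = ((1 + z) ^ (2 * n) + n.centralBinom * z ^ n) / z ^ n - Qnn n z⁻¹ := by
    rw [← hrefl]; field_simp; ring
  have h4 : (2 : ℂ) ^ (2 * n) = 4 ^ n := by rw [pow_mul]; norm_num
  rw [scaledQnn, scaledQnn, hQ, h4, normalizedCentralBinom, div_pow, mul_pow, ← pow_mul,
    add_comm z 1]
  push_cast
  field_simp
  ring

theorem tendstoUniformlyOn_scaledQnn_of_subset_closedBall {L : Set ℂ} (hL : IsCompact L)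
    (hLball : L ⊆ closedBall 0 1) (hL1 : (1 : ℂ) ∉ L) :
    TendstoUniformlyOn scaledQnn (fun _ => 1) atTop L := by
  have hL1' : ∀ z ∈ L, z ≠ 1 := fun z hz => ne_of_mem_of_not_mem hz hL1
  obtain ⟨b, hb0, hb⟩ := hL.exists_lt_forall_le_of_forall_lt (f := fun z => -‖1 - z‖)
    (by fun_prop) fun z hz => neg_lt_zero.2 (norm_pos_iff.2 (sub_ne_zero.2 (hL1' z hz).symm))
  have hlim : Tendsto (fun n => |normalizedCentralBinom n - 1|
      + 6 * √π * ((n.centralBinom : ℝ) / 4 ^ n) / -b) atTop (𝓝 0) := by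
    simpa using ((tendsto_normalizedCentralBinom.sub_const 1).abs.add
      ((tendsto_centralBinom_div_four_pow.const_mul (6 * √π)).div_const (-b)))
  refine tendstoUniformlyOn_of_norm_sub_le hlim (Eventually.of_forall fun n z hz => ?_)
  refine (norm_scaledQnn_sub_one_le n (mem_closedBall_zero_iff.1 (hLball hz)) (hL1' z hz)).trans ?_
  have := hb z hz
  gcongr <;> linarith

theorem tendstoUniformlyOn_scaledQnn_inv {L : Set ℂ} (hL : IsCompact L)
    (hL1 : ∀ z ∈ L, 1 ≤ ‖z‖) (h1L : (1 : ℂ) ∉ L) :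
    TendstoUniformlyOn (fun n z => scaledQnn n z⁻¹) (fun _ => 1) atTop L := by
  have hL0 : ∀ z ∈ L, z ≠ 0 := fun z hz => norm_pos_iff.1 (zero_lt_one.trans_le (hL1 z hz))
  refine ((tendstoUniformlyOn_scaledQnn_of_subset_closedBall
    (hL.image_of_continuousOn (continuousOn_inv₀.mono hL0)) ?_ ?_).comp (·⁻¹)).mono
    (Set.subset_preimage_image _ L)
  · rintro _ ⟨z, hz, rfl⟩
    rw [mem_closedBall_zero_iff, norm_inv]
    exact inv_le_one_of_one_le₀ (hL1 z hz)
  · rintro ⟨z, hz, hz1⟩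
    exact h1L (inv_eq_one.1 hz1 ▸ hz)

theorem tendstoUniformlyOn_scaledQnn_of_one_le_norm {L : Set ℂ} (hL : IsCompact L)
    (hL1 : ∀ z ∈ L, 1 ≤ ‖z‖) (hLw : ∀ z ∈ L, ‖(z + 1) ^ 2 / (4 * z)‖ < 1) :
    TendstoUniformlyOn scaledQnn (fun _ => 1) atTop L := by
  have hL0 : ∀ z ∈ L, z ≠ 0 := fun z hz => norm_pos_iff.1 (zero_lt_one.trans_le (hL1 z hz))
  have h1L : (1 : ℂ) ∉ L := fun h => by have := hLw 1 h; norm_num at this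
  obtain ⟨ρ, hρ1, hρ⟩ := hL.exists_lt_forall_le_of_forall_lt
    (ContinuousOn.div (by fun_prop) (by fun_prop)
      fun z hz => mul_ne_zero (by norm_num) (hL0 z hz)).norm hLw
  obtain ⟨R, hR⟩ := hL.isBounded.exists_norm_le
  have h1R : ∀ z ∈ L, ‖1 - z‖ ≤ 1 + R := fun z hz =>
    (norm_sub_le _ _).trans (by rw [norm_one]; linarith [hR z hz])
  have hpow : TendstoUniformlyOn
      (fun (n : ℕ) (z : ℂ) => ((√(π * n) : ℝ) : ℂ) * ((z + 1) ^ 2 / (4 * z)) ^ n)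
      (fun _ => 0) atTop L := by
    refine tendstoUniformlyOn_of_norm_sub_le (tendsto_sqrt_pi_mul_mul_pow (le_max_right ρ 0)
      (max_lt hρ1 one_pos)) (Eventually.of_forall fun n z hz => ?_)
    rw [sub_zero, norm_mul, Complex.norm_real, Real.norm_of_nonneg (Real.sqrt_nonneg _), norm_pow]
    gcongr
    exact (hρ z hz).trans (le_max_left ρ 0)
  have hconst : TendstoUniformlyOn (fun n (_ : ℂ) => (normalizedCentralBinom n : ℂ))
      (fun _ => 1) atTop L := by
    simpa using tendsto_normalizedCentralBinom.ofReal.tendstoUniformlyOn_const L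
  refine ((((hpow.mul_left_of_norm_le h1R).add (hconst.mul_left_of_norm_le h1R)).add
    ((tendstoUniformlyOn_scaledQnn_inv hL hL1 h1L).mul_left_of_norm_le hR)).congr ?_).congr_right ?_
  · exact Eventually.of_forall fun n z hz => (scaledQnn_eq_add_scaledQnn_inv n (hL0 z hz)).symm
  · intro z _
    simp only [Pi.add_apply]
    ring

theorem stmt13 (K : Set ℂ) (hK : IsCompact K)
    (hKsub : K ⊆ {z : ℂ | ‖(z + 1) ^ 2 / (4 * z)‖ < 1} ∪
      {z : ℂ | 1 < ‖(z + 1) ^ 2 / (4 * z)‖ ∧ ‖z‖ < 1}) :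
    TendstoUniformlyOn
      (fun (n : ℕ) (z : ℂ) =>
        Qnn n z * ((Real.sqrt (π * n) : ℝ) : ℂ) * (1 - z) / 2 ^ (2 * n))
      (fun _ => 1) atTop K := by
  have h1K : (1 : ℂ) ∉ K := fun h => by rcases hKsub h with h | h <;> norm_num at h
  have hsplit : K ⊆ (K ∩ closedBall 0 1) ∪ (K ∩ {z | 1 ≤ ‖z‖}) := fun z hz =>
    (le_total ‖z‖ 1).imp (fun h => ⟨hz, mem_closedBall_zero_iff.2 h⟩) (fun h => ⟨hz, h⟩)
  refine (TendstoUniformlyOn.union ?_ ?_).mono hsplit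
  · exact tendstoUniformlyOn_scaledQnn_of_subset_closedBall (hK.inter_right isClosed_closedBall)
      Set.inter_subset_right fun h => h1K h.1
  · exact tendstoUniformlyOn_scaledQnn_of_one_le_norm
      (hK.inter_right (isClosed_le continuous_const continuous_norm)) (fun z hz => hz.2)
      fun z hz => (hKsub hz.1).resolve_right fun h => (not_lt.2 hz.2) h.2
end

section
/- For |z| > 1, lim_{n→∞} |Q_{n,n}(z)|^{1/n} = |(z+1)²/z| if |(z+1)²/(4z)| > 1, while lim_{n→∞} |Q_{n,n}(z)|^{1/n} = 4 for all z with |(z+1)²/(4z)| < 1, where Q_{n,n}(z) = Σ_{k=0}^n C(2n, k+n) z^k. -/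
/-!
Put `u = (z+1)²/z`. Splitting the binomial expansion of `(1+z)^{2n} = z^n u^n` in the middle and
reflecting its lower half by `z ↦ z⁻¹` gives `Qnn n z = u^n - z⁻¹ QnnTail n z⁻¹`, where
`Qnn n w = C(2n,n) + w QnnTail n w`. On the closed unit disc both polynomials are `O(4^n)`,
while `|Qnn n w| ≥ (1 - Re w) 4^n / poly(n)` and `|QnnTail n w| ≥ (1 - |w|) 4^n / poly(n)`: their
coefficients decrease, so Abel summation writes `(1 - w) P(w)` as `a₀` minus a combination of
`w, w², …` with nonnegative weights of total `a₀` (an Eneström–Kakeya argument). Hence for `|z| > 1`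
the term `u^n` dominates when `|u| > 4` and is negligible when `|u| < 4`, and for `|z| ≤ 1`, `z ≠ 1`
the lower bound for `Qnn n z` applies directly.
-/

open Filter Real

open Finset Topology

lemma tendsto_const_rpow_one_div_nat {c : ℝ} (hc : 0 < c) :
    Tendsto (fun n : ℕ => c ^ ((1 : ℝ) / n)) atTop (𝓝 1) := by
  have := (continuousAt_const_rpow (b := 0) hc.ne').tendsto.comp
    (tendsto_one_div_atTop_nhds_zero_nat (𝕜 := ℝ))
  rwa [rpow_zero] at this

lemma tendsto_rpow_one_div_of_bounds {x : ℕ → ℝ} {L c C : ℝ} (k : ℕ) (hL : 0 < L) (hc : 0 < c)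
    (hC : 0 < C) (hlow : ∀ᶠ n : ℕ in atTop, c * L ^ n / n ^ k ≤ x n)
    (hup : ∀ᶠ n : ℕ in atTop, x n ≤ C * L ^ n) :
    Tendsto (fun n : ℕ => x n ^ ((1 : ℝ) / n)) atTop (𝓝 L) := by
  have root_pow : ∀ n : ℕ, n ≠ 0 → (L ^ n) ^ ((1 : ℝ) / n) = L := fun n hn => by
    rw [one_div, pow_rpow_inv_natCast hL.le hn]
  have hnat : Tendsto (fun n : ℕ => (n : ℝ) ^ ((1 : ℝ) / n)) atTop (𝓝 1) :=
    tendsto_rpow_div.comp tendsto_natCast_atTop_atTop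
  have hlow' : Tendsto (fun n : ℕ => (c * L ^ n / n ^ k) ^ ((1 : ℝ) / n)) atTop (𝓝 L) := by
    have := ((tendsto_const_rpow_one_div_nat hc).mul_const L).div (hnat.pow k) (by simp)
    rw [one_mul, one_pow, div_one] at this
    refine this.congr' ?_
    filter_upwards [eventually_ne_atTop 0] with n hn
    rw [div_rpow (by positivity) (by positivity), mul_rpow hc.le (by positivity), root_pow n hn,
      ← rpow_pow_comm (Nat.cast_nonneg n), Pi.div_apply]
  have hup' : Tendsto (fun n : ℕ => (C * L ^ n) ^ ((1 : ℝ) / n)) atTop (𝓝 L) := by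
    have := (tendsto_const_rpow_one_div_nat hC).mul_const L
    rw [one_mul] at this
    refine this.congr' ?_
    filter_upwards [eventually_ne_atTop 0] with n hn
    rw [mul_rpow hC.le (by positivity), root_pow n hn]
  refine tendsto_of_tendsto_of_tendsto_of_le_of_le' hlow' hup' ?_ ?_
  · filter_upwards [hlow] with n hn
    exact rpow_le_rpow (by positivity) hn (by positivity)
  · filter_upwards [hlow, hup] with n hl hu
    exact rpow_le_rpow ((by positivity : (0:ℝ) ≤ c * L ^ n / n ^ k).trans hl) hu (by positivity)

section EnestromKakeya

variable {a : ℕ → ℝ} {N : ℕ}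

lemma one_sub_mul_sum_eq (hN : a N = 0) (w : ℂ) :
    (1 - w) * ∑ k ∈ range N, (a k : ℂ) * w ^ k
      = a 0 - ∑ k ∈ range N, ((a k - a (k + 1) : ℝ) : ℂ) * w ^ (k + 1) := by
  have shift := sum_range_succ' (fun k => (a k : ℂ) * w ^ k) N
  rw [sum_range_succ, hN, Complex.ofReal_zero, zero_mul, add_zero] at shift
  have hmul : ∑ k ∈ range N, (a k : ℂ) * w ^ (k + 1) = w * ∑ k ∈ range N, (a k : ℂ) * w ^ k := by
    rw [mul_sum]; exact sum_congr rfl fun k _ => by ring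
  push_cast
  rw [sum_congr rfl fun k _ => sub_mul _ _ _, sum_sub_distrib, hmul]
  linear_combination shift

lemma sum_range_sub_succ (hN : a N = 0) : ∑ k ∈ range N, (a k - a (k + 1)) = a 0 := by
  rw [sum_range_sub', hN, sub_zero]

theorem mul_one_sub_norm_le_norm_one_sub_mul_sum (ha : Antitone a) (hN : a N = 0) {w : ℂ}
    (hw : ‖w‖ ≤ 1) :
    a 0 * (1 - ‖w‖) ≤ ‖(1 - w) * ∑ k ∈ range N, (a k : ℂ) * w ^ k‖ := by
  have tail : ‖∑ k ∈ range N, ((a k - a (k + 1) : ℝ) : ℂ) * w ^ (k + 1)‖ ≤ a 0 * ‖w‖ :=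
    calc _ ≤ ∑ k ∈ range N, (a k - a (k + 1)) * ‖w‖ := by
          refine (norm_sum_le _ _).trans (sum_le_sum fun k _ => ?_)
          have hk : 0 ≤ a k - a (k + 1) := sub_nonneg.2 (ha k.le_succ)
          rw [norm_mul, Complex.norm_real, Real.norm_of_nonneg hk, norm_pow]
          exact mul_le_mul_of_nonneg_left (pow_le_of_le_one (norm_nonneg w) hw k.succ_ne_zero) hk
      _ = a 0 * ‖w‖ := by rw [← sum_mul, sum_range_sub_succ hN]
  rw [one_sub_mul_sum_eq hN]
  have := norm_sub_norm_le (a 0 : ℂ) (∑ k ∈ range N, ((a k - a (k + 1) : ℝ) : ℂ) * w ^ (k + 1))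
  rw [Complex.norm_real, Real.norm_eq_abs] at this
  nlinarith [le_abs_self (a 0)]

theorem mul_one_sub_re_le_re_one_sub_mul_sum (ha : Antitone a) (hN : a (N + 1) = 0) {w : ℂ}
    (hw : ‖w‖ ≤ 1) :
    (a 0 - a 1) * (1 - w.re) ≤ ((1 - w) * ∑ k ∈ range (N + 1), (a k : ℂ) * w ^ k).re := by
  have tail : ∑ k ∈ range N, (a (k + 1) - a (k + 2)) * (w ^ (k + 2)).re ≤ a 1 := by
    calc _ ≤ ∑ k ∈ range N, (a (k + 1) - a (k + 2)) := by
          refine sum_le_sum fun k _ => ?_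
          have hk : 0 ≤ a (k + 1) - a (k + 2) := sub_nonneg.2 (ha (k + 1).le_succ)
          have hre : (w ^ (k + 2)).re ≤ 1 := (Complex.re_le_norm _).trans
            (by rw [norm_pow]; exact pow_le_one₀ (norm_nonneg w) hw)
          nlinarith
      _ = a 1 := sum_range_sub_succ (a := fun k => a (k + 1)) hN
  rw [one_sub_mul_sum_eq hN, Complex.sub_re, Complex.ofReal_re, Complex.re_sum, sum_range_succ']
  simp only [Complex.re_ofReal_mul, zero_add, pow_one]
  linarith

end EnestromKakeya

theorem Nat.choose_succ_le_choose_of_le {m r : ℕ} (h : m ≤ 2 * r + 1) :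
    m.choose (r + 1) ≤ m.choose r := by
  refine Nat.le_of_mul_le_mul_right ?_ r.succ_pos
  rw [Nat.choose_succ_right_eq]
  exact Nat.mul_le_mul_left _ (by omega)

theorem antitone_choose_add (n : ℕ) : Antitone fun k => ((2 * n).choose (k + n) : ℝ) :=
  antitone_nat_of_succ_le fun k => by
    rw [Nat.cast_le, add_right_comm]
    exact Nat.choose_succ_le_choose_of_le (by omega)

theorem succ_mul_choose_succ_eq (n : ℕ) :
    ((n : ℝ) + 1) * (2 * n).choose (n + 1) = n * (2 * n).choose n := by
  have h := Nat.choose_succ_right_eq (2 * n) n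
  rw [show 2 * n - n = n by omega] at h
  exact_mod_cast by linarith

theorem four_pow_le_two_mul_choose {n : ℕ} (hn : 0 < n) :
    (4 : ℝ) ^ n ≤ 2 * n * (2 * n).choose n := by
  have h := Nat.four_pow_le_two_mul_self_mul_centralBinom n hn
  rw [Nat.centralBinom_eq_two_mul_choose] at h
  exact_mod_cast h

theorem four_pow_le_choose_succ {n : ℕ} (hn : 0 < n) :
    (4 : ℝ) ^ n ≤ 4 * n * (2 * n).choose (n + 1) := by
  have h1 : (1 : ℝ) ≤ n := by exact_mod_cast hn
  nlinarith [four_pow_le_two_mul_choose hn, succ_mul_choose_succ_eq n,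
    (Nat.cast_nonneg _ : (0 : ℝ) ≤ (2 * n).choose n)]

theorem four_pow_le_choose_sub_choose_succ {n : ℕ} (hn : 0 < n) :
    (4 : ℝ) ^ n ≤ 4 * n ^ 2 * ((2 * n).choose n - (2 * n).choose (n + 1)) := by
  have h1 : (1 : ℝ) ≤ n := by exact_mod_cast hn
  nlinarith [four_pow_le_two_mul_choose hn, succ_mul_choose_succ_eq n,
    (Nat.cast_nonneg _ : (0 : ℝ) ≤ (2 * n).choose n)]

theorem sum_choose_add_le (n : ℕ) : ∑ k ∈ range (n + 1), ((2 * n).choose (k + n) : ℝ) ≤ 4 ^ n := by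
  have h := Nat.sum_range_choose (2 * n)
  rw [show 2 * n + 1 = n + (n + 1) by omega, sum_range_add] at h
  have : ∑ k ∈ range (n + 1), (2 * n).choose (k + n) ≤ 4 ^ n := by
    rw [show 4 ^ n = 2 ^ (2 * n) by rw [pow_mul]; norm_num, ← h]
    simp only [add_comm _ n]
    exact Nat.le_add_left _ _
  exact_mod_cast this

theorem norm_Qnn_le (n : ℕ) {w : ℂ} (hw : ‖w‖ ≤ 1) : ‖Qnn n w‖ ≤ 4 ^ n :=
  calc ‖Qnn n w‖ ≤ ∑ k ∈ range (n + 1), ((2 * n).choose (k + n) : ℝ) := by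
        refine (norm_sum_le _ _).trans (sum_le_sum fun k _ => ?_)
        rw [norm_mul, norm_pow, Complex.norm_natCast]
        exact mul_le_of_le_one_right (Nat.cast_nonneg _) (pow_le_one₀ (norm_nonneg w) hw)
    _ ≤ 4 ^ n := sum_choose_add_le n

noncomputable def QnnTail (n : ℕ) (w : ℂ) : ℂ :=
  ∑ k ∈ range n, ((2 * n).choose (k + 1 + n) : ℂ) * w ^ k

theorem Qnn_eq_choose_add_mul_QnnTail (n : ℕ) (w : ℂ) :
    Qnn n w = (2 * n).choose n + w * QnnTail n w := by
  rw [Qnn, sum_range_succ', QnnTail, mul_sum, add_comm]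
  simp only [zero_add, pow_zero, mul_one, pow_succ]
  congr 1
  exact sum_congr rfl fun k _ => by ring

theorem Qnn_eq_pow_sub (n : ℕ) {z : ℂ} (hz : z ≠ 0) :
    Qnn n z = ((z + 1) ^ 2 / z) ^ n - z⁻¹ * QnnTail n z⁻¹ := by
  have lower : ∑ j ∈ range n, z ^ j * ((2 * n).choose j : ℂ) = z ^ n * (z⁻¹ * QnnTail n z⁻¹) := by
    rw [← sum_range_reflect, QnnTail, mul_sum, mul_sum]
    refine sum_congr rfl fun k hk => ?_
    have hk : k < n := mem_range.1 hk
    have hpow : z ^ n = z ^ (n - 1 - k) * z ^ (k + 1) := by rw [← pow_add]; congr 1; omega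
    rw [← Nat.choose_symm (by omega : k + 1 + n ≤ 2 * n),
      show 2 * n - (k + 1 + n) = n - 1 - k by omega, hpow, inv_pow]
    field_simp
    ring
  have upper :
      ∑ j ∈ range (n + 1), z ^ (n + j) * ((2 * n).choose (n + j) : ℂ) = z ^ n * Qnn n z := by
    rw [Qnn, mul_sum]
    exact sum_congr rfl fun k _ => by rw [pow_add, add_comm n k]; ring
  have binom : (z + 1) ^ (2 * n) = z ^ n * (Qnn n z + z⁻¹ * QnnTail n z⁻¹) := by
    rw [add_pow, show 2 * n + 1 = n + (n + 1) by omega, sum_range_add]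
    simp only [one_pow, mul_one]
    rw [lower, upper]
    ring
  rw [div_pow, ← pow_mul, binom, mul_div_cancel_left₀ _ (pow_ne_zero n hz), add_sub_cancel_right]

theorem norm_one_sub_mul_le {w : ℂ} (hw : ‖w‖ ≤ 1) (x : ℂ) : ‖(1 - w) * x‖ ≤ 2 * ‖x‖ := by
  rw [norm_mul]
  gcongr
  calc ‖1 - w‖ ≤ ‖(1 : ℂ)‖ + ‖w‖ := norm_sub_le _ _
    _ ≤ 2 := by rw [norm_one]; linarith

theorem norm_mul_QnnTail_le (n : ℕ) {w : ℂ} (hw : ‖w‖ ≤ 1) : ‖w * QnnTail n w‖ ≤ 2 * 4 ^ n := by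
  have hC : ((2 * n).choose n : ℝ) ≤ 4 ^ n := by
    rw [← Nat.centralBinom_eq_two_mul_choose]; exact_mod_cast Nat.centralBinom_le_four_pow n
  calc ‖w * QnnTail n w‖ = ‖Qnn n w - (2 * n).choose n‖ := by
        rw [Qnn_eq_choose_add_mul_QnnTail, add_sub_cancel_left]
    _ ≤ ‖Qnn n w‖ + (2 * n).choose n := by
        simpa only [Complex.norm_natCast] using norm_sub_le (Qnn n w) ((2 * n).choose n)
    _ ≤ 2 * 4 ^ n := by linarith [norm_Qnn_le n hw]

theorem choose_succ_mul_one_sub_norm_le (n : ℕ) {w : ℂ} (hw : ‖w‖ ≤ 1) :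
    (2 * n).choose (n + 1) * (1 - ‖w‖) ≤ 2 * ‖QnnTail n w‖ := by
  have h := mul_one_sub_norm_le_norm_one_sub_mul_sum
    (a := fun k => ((2 * n).choose (k + 1 + n) : ℝ)) (N := n)
    (fun i j hij => antitone_choose_add n (by omega))
    (by simp only [Nat.cast_eq_zero]; exact Nat.choose_eq_zero_of_lt (by omega)) hw
  simp only [Complex.ofReal_natCast, zero_add, add_comm 1 n] at h
  exact h.trans (norm_one_sub_mul_le hw _)

theorem choose_sub_choose_succ_mul_le (n : ℕ) {w : ℂ} (hw : ‖w‖ ≤ 1) :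
    ((2 * n).choose n - (2 * n).choose (n + 1)) * (1 - w.re) ≤ 2 * ‖Qnn n w‖ := by
  have h := mul_one_sub_re_le_re_one_sub_mul_sum (antitone_choose_add n) (N := n)
    (by simp only [Nat.cast_eq_zero]; exact Nat.choose_eq_zero_of_lt (by omega)) hw
  simp only [Complex.ofReal_natCast, zero_add, add_comm 1 n] at h
  exact h.trans ((Complex.re_le_norm _).trans (norm_one_sub_mul_le hw _))

theorem le_norm_mul_QnnTail {n : ℕ} (hn : 0 < n) {w : ℂ} (hw : ‖w‖ ≤ 1) :
    ‖w‖ * (1 - ‖w‖) / 8 * 4 ^ n / n ≤ ‖w * QnnTail n w‖ := by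
  rw [norm_mul, div_le_iff₀ (by positivity)]
  have hw' : 0 ≤ 1 - ‖w‖ := sub_nonneg.2 hw
  calc ‖w‖ * (1 - ‖w‖) / 8 * 4 ^ n
        ≤ ‖w‖ * (1 - ‖w‖) / 8 * (4 * n * (2 * n).choose (n + 1)) :=
        mul_le_mul_of_nonneg_left (four_pow_le_choose_succ hn) (by positivity)
    _ = ‖w‖ * n / 2 * ((2 * n).choose (n + 1) * (1 - ‖w‖)) := by ring
    _ ≤ ‖w‖ * n / 2 * (2 * ‖QnnTail n w‖) :=
        mul_le_mul_of_nonneg_left (choose_succ_mul_one_sub_norm_le n hw) (by positivity)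
    _ = ‖w‖ * ‖QnnTail n w‖ * n := by ring

theorem tendsto_norm_Qnn_rpow_of_four_lt {z : ℂ} (hz : 1 < ‖z‖) (hu : 4 < ‖(z + 1) ^ 2 / z‖) :
    Tendsto (fun n : ℕ => ‖Qnn n z‖ ^ ((1 : ℝ) / n)) atTop (𝓝 ‖(z + 1) ^ 2 / z‖) := by
  set A := ‖(z + 1) ^ 2 / z‖
  have hz0 : z ≠ 0 := norm_pos_iff.1 (one_pos.trans hz)
  have close : ∀ n : ℕ, |‖Qnn n z‖ - A ^ n| ≤ 2 * 4 ^ n := fun n => by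
    rw [Qnn_eq_pow_sub n hz0, ← norm_pow]
    refine (abs_norm_sub_norm_le _ _).trans ?_
    rw [sub_sub_cancel_left, norm_neg]
    exact norm_mul_QnnTail_le n (by rw [norm_inv]; exact inv_le_one_of_one_le₀ hz.le)
  have small : ∀ᶠ n : ℕ in atTop, 2 * 4 ^ n ≤ A ^ n / 2 := by
    have := tendsto_pow_atTop_nhds_zero_of_lt_one (by positivity) ((div_lt_one (by linarith)).2 hu)
    filter_upwards [this.eventually_le_const (by norm_num : (0 : ℝ) < 1 / 4)] with n hn
    rw [div_pow, div_le_iff₀ (by positivity)] at hn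
    linarith
  refine tendsto_rpow_one_div_of_bounds 0 (by linarith) (by norm_num : (0 : ℝ) < 1 / 2)
    (by norm_num : (0 : ℝ) < 2) ?_ ?_ <;> filter_upwards [small] with n hn
  · rw [pow_zero, div_one]
    linarith [abs_le.1 (close n)]
  · linarith [abs_le.1 (close n)]

theorem re_lt_one_of_norm_le_one {z : ℂ} (hz : ‖z‖ ≤ 1) (hz1 : z ≠ 1) : z.re < 1 := by
  refine (Complex.re_le_norm z |>.trans hz).lt_of_ne fun hre => hz1 ?_
  have him : z.im = 0 := by
    have := Complex.sq_norm z
    rw [Complex.normSq_apply] at this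
    nlinarith [Complex.re_le_norm z, norm_nonneg z]
  exact Complex.ext (by simpa using hre) (by simpa using him)

theorem tendsto_norm_Qnn_rpow_of_norm_le_one {z : ℂ} (hz : ‖z‖ ≤ 1) (hz1 : z ≠ 1) :
    Tendsto (fun n : ℕ => ‖Qnn n z‖ ^ ((1 : ℝ) / n)) atTop (𝓝 4) := by
  have hre : 0 < 1 - z.re := sub_pos.2 (re_lt_one_of_norm_le_one hz hz1)
  refine tendsto_rpow_one_div_of_bounds 2 (by norm_num) (by positivity : 0 < (1 - z.re) / 8)
    one_pos ?_ (Eventually.of_forall fun n => by simpa using norm_Qnn_le n hz)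
  filter_upwards [eventually_gt_atTop 0] with n hn
  rw [div_le_iff₀ (by positivity)]
  nlinarith [four_pow_le_choose_sub_choose_succ hn, choose_sub_choose_succ_mul_le n hz]

theorem tendsto_norm_Qnn_rpow_of_lt_four {z : ℂ} (hz : 1 < ‖z‖) (hu : ‖(z + 1) ^ 2 / z‖ < 4) :
    Tendsto (fun n : ℕ => ‖Qnn n z‖ ^ ((1 : ℝ) / n)) atTop (𝓝 4) := by
  have hz0 : z ≠ 0 := norm_pos_iff.1 (one_pos.trans hz)
  have hr0 : 0 < ‖z⁻¹‖ := norm_pos_iff.2 (inv_ne_zero hz0)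
  have hr1 : ‖z⁻¹‖ < 1 := by rw [norm_inv]; exact inv_lt_one_of_one_lt₀ hz
  set A := ‖(z + 1) ^ 2 / z‖
  set r := ‖z⁻¹‖
  have hc : 0 < r * (1 - r) / 16 := by nlinarith
  have small : ∀ᶠ n : ℕ in atTop, A ^ n ≤ r * (1 - r) / 16 * 4 ^ n / n := by
    have := tendsto_self_mul_const_pow_of_lt_one (by positivity) ((div_lt_one (by norm_num)).2 hu)
    filter_upwards [this.eventually_le_const hc, eventually_gt_atTop 0] with n hn hn0
    rw [div_pow, mul_div_assoc', div_le_iff₀ (by positivity)] at hn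
    rw [le_div_iff₀ (by positivity)]
    linarith
  have split : ∀ n : ℕ, Qnn n z = ((z + 1) ^ 2 / z) ^ n - z⁻¹ * QnnTail n z⁻¹ :=
    fun n => Qnn_eq_pow_sub n hz0
  refine tendsto_rpow_one_div_of_bounds 1 (by norm_num) hc (by norm_num : (0 : ℝ) < 3) ?_ ?_
  · filter_upwards [small, eventually_gt_atTop 0] with n hn hn0
    have := norm_sub_norm_le (z⁻¹ * QnnTail n z⁻¹) (((z + 1) ^ 2 / z) ^ n)
    rw [norm_sub_rev, ← split, norm_pow] at this
    have halve : r * (1 - r) / 8 * 4 ^ n / n = 2 * (r * (1 - r) / 16 * 4 ^ n / n) := by ring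
    rw [pow_one]
    linarith [le_norm_mul_QnnTail hn0 hr1.le]
  · refine Eventually.of_forall fun n => ?_
    have := norm_sub_le (((z + 1) ^ 2 / z) ^ n) (z⁻¹ * QnnTail n z⁻¹)
    rw [← split, norm_pow] at this
    have : A ^ n ≤ 4 ^ n := pow_le_pow_left₀ (norm_nonneg _) hu.le n
    linarith [norm_mul_QnnTail_le n hr1.le]

theorem stmt14 (z : ℂ) :
    (1 < ‖(z + 1) ^ 2 / (4 * z)‖ → 1 < ‖z‖ →
      Tendsto (fun n : ℕ => ‖Qnn n z‖ ^ ((1 : ℝ) / n)) atTop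
        (nhds ‖(z + 1) ^ 2 / z‖)) ∧
    (‖(z + 1) ^ 2 / (4 * z)‖ < 1 →
      Tendsto (fun n : ℕ => ‖Qnn n z‖ ^ ((1 : ℝ) / n)) atTop (nhds 4)) := by
  have hscale : ‖(z + 1) ^ 2 / (4 * z)‖ = ‖(z + 1) ^ 2 / z‖ / 4 := by
    rw [div_mul_eq_div_div_swap, norm_div, Complex.norm_ofNat]
  rw [hscale]
  refine ⟨fun hu hz => tendsto_norm_Qnn_rpow_of_four_lt hz (by linarith), fun hu => ?_⟩
  rcases le_or_gt ‖z‖ 1 with hz | hz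
  · refine tendsto_norm_Qnn_rpow_of_norm_le_one hz ?_
    rintro rfl
    norm_num at hu
  · exact tendsto_norm_Qnn_rpow_of_lt_four hz (by linarith)
end

section
/- Let n, m be positive integers, λ ∈ ℂ, r > 0, and set ρ = 2^m(|λ| + r) − |λ|. If all zeros of the polynomial φ_n (of degree n) lie in the closed disc {|z| ≤ r}, then all zeros of the iterated integral I_{m,λ}(φ_n) lie in the closed disc {|z| ≤ ρ}. -/
/-!
Up to a nonzero constant, `iterI n m λ p` is the `m`-fold primitive `Q_m` of `p` normalised by
`Q_k(λ) = 0` (Cauchy's formula for repeated integration), so the bound follows by induction on `m`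
from: if `f(a) = f(z) = 0` and all critical points of `f` lie in `|w| ≤ R`, then
`|z| ≤ |a| + 2R`. Otherwise, in the coordinate `t ↦ a + t (z - a)` all critical points lie in a
half-plane `re t ≤ c < 1/2`, while `∫₀¹ f' = 0` says that `f'` is apolar to `∫₀¹ (X - t)^N dt`,
whose zeros lie on `re t = 1/2`. This contradicts Grace's theorem for half-planes, which is proved
by splitting off one zero at a time with Laguerre's theorem on polar derivatives.
-/

open MeasureTheory

/-- Normalized `m`-fold iterated integral of a degree-`n` polynomial `p`
with base point `lam`, as a single integral. -/
noncomputable def iterI (n m : ℕ) (lam : ℂ) (p : Polynomial ℂ) (z : ℂ) : ℂ :=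
  ((Nat.factorial (n + m) : ℂ) /
      ((Nat.factorial (m - 1) : ℂ) * (Nat.factorial n : ℂ))) *
    segInt (fun s => (z - s) ^ (m - 1) * p.eval s) lam z

open Polynomial Finset
open scoped Nat

namespace Polynomial

variable {K : Type*} [Field K]

noncomputable def antiderivative (q : K[X]) : K[X] :=
  q.sum fun i a => C (a / (i + 1)) * X ^ (i + 1)

theorem derivative_antiderivative [CharZero K] (q : K[X]) :
    derivative (antiderivative q) = q := by
  conv_rhs => rw [← q.sum_C_mul_X_pow_eq]
  simp only [antiderivative, Polynomial.sum, derivative_sum, derivative_C_mul_X_pow]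
  refine Finset.sum_congr rfl fun i _ => ?_
  push_cast
  rw [div_mul_cancel₀ _ (Nat.cast_add_one_ne_zero i)]

noncomputable def primitive (a : K) (q : K[X]) : K[X] :=
  antiderivative q - C ((antiderivative q).eval a)

@[simp] theorem derivative_primitive [CharZero K] (a : K) (q : K[X]) :
    derivative (primitive a q) = q := by
  simp [primitive, derivative_antiderivative]

@[simp] theorem eval_primitive_self (a : K) (q : K[X]) : (primitive a q).eval a = 0 := by
  simp [primitive]

end Polynomial

theorem segInt_eval_derivative (A : ℂ[X]) (a b : ℂ) :
    segInt (fun s => (derivative A).eval s) a b = A.eval b - A.eval a := by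
  have hderiv (t : ℝ) : HasDerivAt (fun t : ℝ => A.eval (a + t * (b - a)))
      ((b - a) * (derivative A).eval (a + t * (b - a))) t := by
    have hline : HasDerivAt (fun w : ℂ => a + w * (b - a)) (b - a) t := by
      simpa using ((hasDerivAt_id (t : ℂ)).mul_const (b - a)).const_add a
    simpa [mul_comm] using ((A.hasDerivAt _).comp (t : ℂ) hline).comp_ofReal
  have hcont : Continuous fun t : ℝ => (b - a) * (derivative A).eval (a + t * (b - a)) := by
    fun_prop
  rw [segInt, ← intervalIntegral.integral_const_mul,
    intervalIntegral.integral_eq_sub_of_hasDerivAt (fun t _ => hderiv t)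
      (hcont.intervalIntegrable 0 1)]
  simp

theorem segInt_add {a b : ℂ} {f g : ℂ → ℂ} (hf : Continuous f) (hg : Continuous g) :
    segInt (fun s => f s + g s) a b = segInt f a b + segInt g a b := by
  have hf' : Continuous fun t : ℝ => f (a + t * (b - a)) := by fun_prop
  have hg' : Continuous fun t : ℝ => g (a + t * (b - a)) := by fun_prop
  rw [segInt, segInt, segInt, ← mul_add,
    intervalIntegral.integral_add (hf'.intervalIntegrable 0 1) (hg'.intervalIntegrable 0 1)]

theorem segInt_const_mul {a b : ℂ} (c : ℂ) (f : ℂ → ℂ) :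
    segInt (fun s => c * f s) a b = c * segInt f a b := by
  rw [segInt, segInt, intervalIntegral.integral_const_mul, mul_left_comm]

theorem segInt_pow_mul_eval (p : ℂ[X]) (a z : ℂ) (M : ℕ) :
    segInt (fun s => (z - s) ^ M * p.eval s) a z = M ! * ((primitive a)^[M + 1] p).eval z := by
  induction M generalizing p with
  | zero =>
    simpa using segInt_eval_derivative (primitive a p) a z
  | succ M ih =>
    set q := primitive a p
    -- integration by parts, written as an identity of polynomials in `s`
    have hparts : (C z - X) ^ (M + 1) * p =
        derivative ((C z - X) ^ (M + 1) * q) + C ((M : ℂ) + 1) * ((C z - X) ^ M * q) := by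
      simp only [derivative_mul, derivative_pow, derivative_sub, derivative_C, derivative_X,
        derivative_primitive, q]
      push_cast
      ring
    have hvanish_z : ((C z - X) ^ (M + 1) * q).eval z = 0 := by simp
    have hvanish_a : ((C z - X) ^ (M + 1) * q).eval a = 0 := by simp [q]
    calc segInt (fun s => (z - s) ^ (M + 1) * p.eval s) a z
        = segInt (fun s => ((C z - X) ^ (M + 1) * p).eval s) a z := by simp
      _ = ((C z - X) ^ (M + 1) * q).eval z - ((C z - X) ^ (M + 1) * q).eval a
            + (M + 1) * segInt (fun s => (z - s) ^ M * q.eval s) a z := by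
          rw [hparts]
          simp only [eval_add]
          rw [segInt_add (Polynomial.continuous _) (Polynomial.continuous _),
            segInt_eval_derivative]
          simpa using segInt_const_mul ((M : ℂ) + 1) (fun s => (z - s) ^ M * q.eval s)
      _ = (M + 1)! * ((primitive a)^[M + 1 + 1] p).eval z := by
          rw [hvanish_z, hvanish_a, ih, Function.iterate_succ_apply _ (M + 1), Nat.factorial_succ]
          push_cast
          ring

/-- `N!` times the classical apolar form `∑ (-1)^k a_k b_{N-k} / (N choose k)` of two polynomials
of degree at most `N`. -/
noncomputable def apolarPairing {R : Type*} [CommRing R] (N : ℕ) (P Q : R[X]) : R :=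
  ∑ k ∈ range (N + 1), (-1) ^ k * k ! * (N - k)! * P.coeff k * Q.coeff (N - k)

noncomputable def polarDerivative {R : Type*} [CommRing R] (N : ℕ) (ζ : R) (P : R[X]) : R[X] :=
  C (N : R) * P + (C ζ - X) * derivative P

section Apolarity

variable {R : Type*} [CommRing R] {N : ℕ} {P P₁ P₂ Q Q₁ Q₂ : R[X]}

theorem apolarPairing_add_left :
    apolarPairing N (P₁ + P₂) Q = apolarPairing N P₁ Q + apolarPairing N P₂ Q := by
  simp only [apolarPairing, coeff_add, ← sum_add_distrib]
  exact sum_congr rfl fun _ _ => by ring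

theorem apolarPairing_C_mul_left (c : R) :
    apolarPairing N (C c * P) Q = c * apolarPairing N P Q := by
  simp only [apolarPairing, coeff_C_mul, mul_sum]
  exact sum_congr rfl fun _ _ => by ring

theorem apolarPairing_sub_right :
    apolarPairing N P (Q₁ - Q₂) = apolarPairing N P Q₁ - apolarPairing N P Q₂ := by
  simp only [apolarPairing, coeff_sub, ← sum_sub_distrib]
  exact sum_congr rfl fun _ _ => by ring

theorem apolarPairing_C_mul_right (c : R) :
    apolarPairing N P (C c * Q) = c * apolarPairing N P Q := by
  simp only [apolarPairing, coeff_C_mul, mul_sum]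
  exact sum_congr rfl fun _ _ => by ring

theorem coeff_X_mul_derivative (P : R[X]) (k : ℕ) : (X * derivative P).coeff k = k * P.coeff k := by
  cases k with
  | zero => simp
  | succ k => rw [coeff_X_mul, coeff_derivative]; push_cast; ring

theorem apolarPairing_X_mul_right :
    apolarPairing (N + 1) P (X * Q) =
      apolarPairing N (C ((N : R) + 1) * P - X * derivative P) Q := by
  rw [apolarPairing, sum_range_succ, Nat.sub_self, coeff_X_mul_zero, mul_zero, add_zero,
    apolarPairing]
  refine sum_congr rfl fun k hk => ?_
  obtain ⟨j, rfl⟩ := Nat.exists_eq_add_of_le (mem_range_succ_iff.mp hk)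
  rw [show k + j + 1 - k = j + 1 by omega, Nat.add_sub_cancel_left, coeff_X_mul, coeff_sub,
    coeff_C_mul, coeff_X_mul_derivative, Nat.factorial_succ]
  push_cast
  ring

theorem apolarPairing_succ_of_natDegree_le (hQ : Q.natDegree ≤ N) :
    apolarPairing (N + 1) P Q = -apolarPairing N (derivative P) Q := by
  rw [apolarPairing, sum_range_succ', Nat.sub_zero,
    coeff_eq_zero_of_natDegree_lt (p := Q) (n := N + 1) (by omega), mul_zero, add_zero,
    apolarPairing, ← sum_neg_distrib]
  refine sum_congr rfl fun k hk => ?_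
  rw [show N + 1 - (k + 1) = N - k by omega, coeff_derivative, Nat.factorial_succ]
  push_cast
  ring

theorem apolarPairing_X_sub_C_mul_right (ζ : R) (hQ : Q.natDegree ≤ N) :
    apolarPairing (N + 1) P ((X - C ζ) * Q) = apolarPairing N (polarDerivative (N + 1) ζ P) Q := by
  have hpolar : polarDerivative (N + 1) ζ P =
      (C ((N : R) + 1) * P - X * derivative P) + C ζ * derivative P := by
    rw [polarDerivative]; push_cast; ring
  rw [sub_mul, apolarPairing_sub_right, apolarPairing_X_mul_right, apolarPairing_C_mul_right,
    apolarPairing_succ_of_natDegree_le hQ, hpolar, apolarPairing_add_left,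
    apolarPairing_C_mul_left]
  ring

theorem coeff_polarDerivative (ζ : R) (P : R[X]) (k : ℕ) :
    (polarDerivative N ζ P).coeff k = (N - k) * P.coeff k + ζ * (k + 1) * P.coeff (k + 1) := by
  rw [polarDerivative, coeff_add, coeff_C_mul, sub_mul, coeff_sub, coeff_C_mul, coeff_derivative,
    coeff_X_mul_derivative]
  ring

theorem natDegree_polarDerivative_le (ζ : R) (hP : P.natDegree ≤ N + 1) :
    (polarDerivative (N + 1) ζ P).natDegree ≤ N := by
  refine natDegree_le_iff_coeff_eq_zero.mpr fun k hk => ?_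
  rw [coeff_polarDerivative, coeff_eq_zero_of_natDegree_lt (by omega : P.natDegree < k + 1)]
  rcases (Nat.succ_le_of_lt hk).eq_or_lt with rfl | hk'
  · push_cast; ring
  · rw [coeff_eq_zero_of_natDegree_lt (by omega : P.natDegree < k)]; ring

end Apolarity

theorem Complex.norm_inv_sub_le_iff {ξ : ℂ} (hξ : ξ ≠ 0) {s : ℝ} (hs : 0 < s) :
    ‖ξ⁻¹ - s‖ ≤ s ↔ 1 ≤ 2 * s * ξ.re := by
  have hξn : 0 < ‖ξ‖ := norm_pos_iff.2 hξ
  rw [show ξ⁻¹ - s = (1 - s * ξ) / ξ by field_simp, norm_div, div_le_iff₀ hξn,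
    ← sq_le_sq₀ (norm_nonneg _) (by positivity), mul_pow, Complex.sq_norm, Complex.sq_norm]
  simp only [Complex.normSq_apply, Complex.sub_re, Complex.sub_im, Complex.mul_re,
    Complex.mul_im, Complex.ofReal_re, Complex.ofReal_im, Complex.one_re, Complex.one_im]
  constructor <;> intro h <;> nlinarith

theorem Multiset.norm_sum_sub_card_nsmul_le {E : Type*} [SeminormedAddCommGroup E]
    {S : Multiset E} {a : E} {r : ℝ} (h : ∀ x ∈ S, ‖x - a‖ ≤ r) :
    ‖S.sum - Multiset.card S • a‖ ≤ Multiset.card S * r := by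
  induction S using Multiset.induction_on with
  | empty => simp
  | cons x S ih =>
    rw [Multiset.sum_cons, Multiset.card_cons, succ_nsmul, Nat.cast_succ, add_one_mul,
      show x + S.sum - (Multiset.card S • a + a) = (S.sum - Multiset.card S • a) + (x - a) by abel]
    exact (norm_add_le _ _).trans (add_le_add (ih fun y hy => h y (Multiset.mem_cons_of_mem hy))
      (h x (Multiset.mem_cons_self x S)))

/-- Inversion maps the half-plane `δ ≤ re ξ` into the closed disc of radius `1/(2δ)` centred at
`1/(2δ)`, and discs are convex. -/
theorem Complex.div_card_le_re_inv_sum_inv {S : Multiset ℂ} (hS : S ≠ 0) {δ : ℝ} (hδ : 0 < δ)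
    (h : ∀ ξ ∈ S, δ ≤ ξ.re) : δ / Multiset.card S ≤ ((S.map (·⁻¹)).sum)⁻¹.re := by
  set s := (2 * δ)⁻¹
  have hs : 0 < s := by positivity
  have h2s : 2 * s * δ = 1 := by simp only [s]; field_simp
  have hne (ξ) (hξ : ξ ∈ S) : ξ ≠ 0 := fun h0 => by simpa [h0] using (h ξ hξ).trans_lt' hδ
  have hball : ∀ y ∈ S.map (·⁻¹), ‖y - s‖ ≤ s := by
    simp only [Multiset.mem_map]
    rintro _ ⟨ξ, hξ, rfl⟩
    rw [Complex.norm_inv_sub_le_iff (hne ξ hξ) hs]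
    nlinarith [h ξ hξ]
  have hpos : 0 < ((S.map (·⁻¹)).sum).re := by
    refine Multiset.sum_induction_nonempty (fun y : ℂ => 0 < y.re)
      (fun a b ha hb => by rw [Complex.add_re]; positivity) (by simpa using hS) ?_
    simp only [Multiset.mem_map]
    rintro _ ⟨ξ, hξ, rfl⟩
    rw [Complex.inv_re]
    exact div_pos (hδ.trans_le (h ξ hξ)) (Complex.normSq_pos.2 (hne ξ hξ))
  have hsum0 : (S.map (·⁻¹)).sum ≠ 0 := fun h0 => by simp [h0] at hpos
  have hd : (0 : ℝ) < Multiset.card S := by exact_mod_cast Multiset.card_pos.2 hS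
  have hsum := Multiset.norm_sum_sub_card_nsmul_le hball
  rw [Multiset.card_map, nsmul_eq_mul, ← Complex.ofReal_natCast, ← Complex.ofReal_mul,
    ← inv_inv (S.map (·⁻¹)).sum, Complex.norm_inv_sub_le_iff (inv_ne_zero hsum0)
      (by positivity)] at hsum
  rw [div_le_iff₀' hd]
  nlinarith [mul_le_mul_of_nonneg_left hsum hδ.le]

/-- Laguerre's theorem, for half-planes. -/
theorem re_le_of_eval_polarDerivative_eq_zero {M : ℕ} {P : ℂ[X]} {c : ℝ} {ζ w : ℂ} (hM : 0 < M)
    (hPd : P.natDegree ≤ M) (hP : ∀ b, P.eval b = 0 → b.re ≤ c) (hζ : c < ζ.re)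
    (hw : (polarDerivative M ζ P).eval w = 0) : w.re ≤ c := by
  by_contra! hwc
  have hPw : P.eval w ≠ 0 := fun h => (hP w h).not_gt hwc
  set S := P.roots.map (w - ·)
  have hV : (w - ζ) * (S.map (·⁻¹)).sum = M := by
    have hlog := (IsAlgClosed.splits P).eval_derivative_eq_eval_mul_sum hPw
    simp only [one_div] at hlog
    simp only [polarDerivative, eval_add, eval_mul, eval_C, eval_sub, eval_X, hlog] at hw
    apply mul_left_cancel₀ hPw
    simp only [S, Multiset.map_map, Function.comp_def]
    linear_combination -hw
  have hM0 : (M : ℂ) ≠ 0 := by exact_mod_cast hM.ne'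
  have hS : S ≠ 0 := fun hS0 => hM0 (by simpa [hS0] using hV.symm)
  have hwζ : w - ζ ≠ 0 := fun h0 => hM0 (by simpa [h0] using hV.symm)
  have hmean := Complex.div_card_le_re_inv_sum_inv hS (sub_pos.2 hwc) fun ξ hξ => by
    obtain ⟨b, hb, rfl⟩ := Multiset.mem_map.1 hξ
    rw [Complex.sub_re]
    linarith [hP b (mem_roots'.1 hb).2]
  rw [← div_mul_cancel_left₀ hwζ, hV, Complex.div_natCast_re, Complex.sub_re] at hmean
  have hcard : (Multiset.card S : ℝ) ≤ M := by
    exact_mod_cast (Multiset.card_map _ _).trans_le ((card_roots' P).trans hPd)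
  have hcard_pos : (0 : ℝ) < Multiset.card S := by exact_mod_cast Multiset.card_pos.2 hS
  have := (div_le_div_of_nonneg_left (sub_pos.2 hwc).le hcard_pos hcard).trans hmean
  rw [div_le_div_iff_of_pos_right (hcard_pos.trans_le hcard)] at this
  linarith

/-- Grace's theorem, for half-planes. -/
theorem apolarPairing_ne_zero {c : ℝ} {N : ℕ} {P Q : ℂ[X]} (hPd : P.natDegree ≤ N)
    (hQd : Q.natDegree = N) (hP : ∀ b, P.eval b = 0 → b.re ≤ c)
    (hQ : ∀ ζ, Q.eval ζ = 0 → c < ζ.re) : apolarPairing N P Q ≠ 0 := by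
  induction N generalizing P Q with
  | zero =>
    have hP0 : P.coeff 0 ≠ 0 := fun h => by
      have := hP (c + 1) (by rw [eq_C_of_natDegree_eq_zero (Nat.le_zero.1 hPd), h]; simp)
      norm_num at this
    have hQ0 : Q.coeff 0 ≠ 0 := fun h => by
      have := hQ c (by rw [eq_C_of_natDegree_eq_zero hQd, h]; simp)
      simp at this
    simpa [apolarPairing] using ⟨hP0, hQ0⟩
  | succ N ih =>
    obtain ⟨ζ, hζ⟩ := Complex.exists_root (f := Q) (by
      rw [degree_eq_natDegree (by rintro rfl; simp at hQd), hQd]; exact_mod_cast N.succ_pos)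
    set Q₁ := Q /ₘ (X - C ζ)
    have hfac : (X - C ζ) * Q₁ = Q := mul_divByMonic_eq_iff_isRoot.2 hζ
    have hQ₁d : Q₁.natDegree = N := by
      rw [natDegree_divByMonic Q (monic_X_sub_C ζ), hQd, natDegree_X_sub_C, Nat.add_sub_cancel]
    rw [← hfac, apolarPairing_X_sub_C_mul_right ζ hQ₁d.le]
    exact ih (natDegree_polarDerivative_le ζ hPd) hQ₁d
      (fun b hb => re_le_of_eval_polarDerivative_eq_zero N.succ_pos hPd hP (hQ ζ hζ) hb)
      (fun ζ' h => hQ ζ' (by rw [← hfac, eval_mul, h, mul_zero]))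

/-- `bisectorPoly N = ∫₀¹ (X - t)^N dt`. Since pairing against `(X - t)^N` evaluates at `t`, pairing
against `bisectorPoly N` integrates over `[0, 1]`; its zeros are equidistant from `0` and `1`. -/
noncomputable def bisectorPoly (N : ℕ) : ℂ[X] :=
  C ((N : ℂ) + 1)⁻¹ * (X ^ (N + 1) - (X - 1) ^ (N + 1))

section BisectorPoly

variable {N : ℕ}

theorem coeff_bisectorPoly {j : ℕ} (hj : j ≤ N) :
    (bisectorPoly N).coeff j = ((N : ℂ) + 1)⁻¹ * ((-1) ^ (N - j) * (N + 1).choose j) := by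
  rw [bisectorPoly, coeff_C_mul, coeff_sub, coeff_X_pow, if_neg (by omega), sub_eq_add_neg X,
    ← C_1, ← C_neg, coeff_X_add_C_pow, show N + 1 - j = N - j + 1 by omega, pow_succ]
  ring

theorem natDegree_bisectorPoly : (bisectorPoly N).natDegree = N := by
  refine natDegree_eq_of_le_of_coeff_ne_zero (natDegree_le_iff_coeff_eq_zero.2 fun j hj => ?_)
    (by simp [coeff_bisectorPoly le_rfl, Nat.cast_add_one_ne_zero])
  rw [bisectorPoly, coeff_C_mul, coeff_sub, coeff_X_pow, sub_eq_add_neg X, ← C_1, ← C_neg,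
    coeff_X_add_C_pow]
  rcases (Nat.succ_le_of_lt hj).eq_or_lt with rfl | hj'
  · simp
  · simp [Nat.choose_eq_zero_of_lt hj', hj'.ne']

theorem re_eq_half_of_eval_bisectorPoly_eq_zero {ζ : ℂ} (hζ : (bisectorPoly N).eval ζ = 0) :
    ζ.re = 1 / 2 := by
  have hpow : ζ ^ (N + 1) = (ζ - 1) ^ (N + 1) := by
    simpa [bisectorPoly, sub_eq_zero, Nat.cast_add_one_ne_zero] using hζ
  have hnorm : ‖ζ‖ = ‖ζ - 1‖ :=
    (pow_left_inj₀ (norm_nonneg _) (norm_nonneg _) N.succ_ne_zero).1 (by simp [← norm_pow, hpow])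
  have hsq := congrArg (· ^ 2) hnorm
  simp only [Complex.sq_norm, Complex.normSq_apply, Complex.sub_re, Complex.sub_im,
    Complex.one_re, Complex.one_im] at hsq
  linarith

theorem apolarPairing_derivative_bisectorPoly {h : ℂ[X]} (hh : h.natDegree ≤ N + 1) :
    apolarPairing N (derivative h) (bisectorPoly N) = N ! * (h.eval 1 - h.eval 0) := by
  rw [eval_eq_sum_range' (n := N + 2) (by omega), sum_range_succ', ← coeff_zero_eq_eval_zero]
  simp only [one_pow, mul_one, add_sub_cancel_right, mul_sum, apolarPairing]
  refine sum_congr rfl fun k hk => ?_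
  obtain ⟨j, rfl⟩ := Nat.exists_eq_add_of_le (mem_range_succ_iff.mp hk)
  rw [coeff_derivative, coeff_bisectorPoly (by omega), Nat.add_sub_cancel_left,
    show k + j - j = k by omega]
  have hfac : ((k + j + 1).choose j : ℂ) * ((k + 1) * k !) * j ! = (k + j + 1) * (k + j)! := by
    have := Nat.add_choose_mul_factorial_mul_factorial (k + 1) j
    rw [show k + 1 + j = k + j + 1 by ring, Nat.factorial_succ (k + j),
      Nat.factorial_succ k] at this
    exact_mod_cast this
  have hsign : (-1 : ℂ) ^ k * (-1) ^ k = 1 := by rw [← mul_pow]; norm_num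
  push_cast
  calc _ = ((-1) ^ k * (-1) ^ k) * (((k + j + 1).choose j : ℂ) * ((k + 1) * k !) * j !)
        * h.coeff (k + 1) * ((k : ℂ) + j + 1)⁻¹ := by ring
    _ = _ := by
      have hN : (k : ℂ) + j + 1 ≠ 0 := by exact_mod_cast (k + j).succ_ne_zero
      rw [hsign, hfac]
      field_simp

end BisectorPoly

theorem Complex.re_lt_half_of_norm_add_mul_le {a u t : ℂ} {R : ℝ} (hfar : ‖a‖ + 2 * R < ‖a + u‖)
    (ht : ‖a + t * u‖ ≤ R) : t.re < 1 / 2 := by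
  by_contra! hre
  have hcloser : ‖t - 1‖ ≤ ‖t‖ := by
    refine (sq_le_sq₀ (norm_nonneg _) (norm_nonneg _)).1 ?_
    simp only [Complex.sq_norm, Complex.normSq_apply, Complex.sub_re, Complex.sub_im,
      Complex.one_re, Complex.one_im]
    nlinarith
  have : ‖a + u‖ ≤ ‖a‖ + 2 * R := calc
    ‖a + u‖ = ‖(a + t * u) - (t - 1) * u‖ := by ring_nf
    _ ≤ R + ‖t‖ * ‖u‖ := by
      grw [norm_sub_le, ht, norm_mul, hcloser]
    _ = R + ‖(a + t * u) - a‖ := by rw [add_sub_cancel_left, norm_mul]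
    _ ≤ ‖a‖ + 2 * R := by grw [norm_sub_le, ht]; linarith
  linarith

theorem Polynomial.exists_lt_forall_re_le {P : ℂ[X]} {s : ℝ} (h : ∀ t, P.eval t = 0 → t.re < s) :
    ∃ c < s, ∀ t, P.eval t = 0 → t.re ≤ c := by
  have hP : P ≠ 0 := by rintro rfl; simpa using h s
  let T := insert (s - 1) (P.roots.toFinset.image Complex.re)
  refine ⟨T.max' (insert_nonempty _ _), (max'_lt_iff _ _).2 fun x hx => ?_, fun t ht => ?_⟩
  · rcases mem_insert.1 hx with rfl | hx
    · linarith
    · obtain ⟨t, ht, rfl⟩ := mem_image.1 hx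
      exact h t (Multiset.mem_toFinset.1 ht |> (mem_roots hP).1)
  · exact le_max' _ _ (mem_insert_of_mem (mem_image_of_mem _ (by simpa [hP] using ht)))

theorem norm_le_of_eval_eq_zero_of_critical_le {f : ℂ[X]} {R : ℝ} (hR : 0 ≤ R)
    (hcrit : ∀ w, (derivative f).eval w = 0 → ‖w‖ ≤ R) {a z : ℂ} (ha : f.eval a = 0)
    (hz : f.eval z = 0) : ‖z‖ ≤ ‖a‖ + 2 * R := by
  by_contra! hfar
  set u := z - a
  have hu : u ≠ 0 := fun hu => by rw [sub_eq_zero.1 hu] at hfar; linarith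
  -- `h t = f (a + t u)` has zeros at `0` and `1`, and critical points in `re t < 1/2`
  set h := f.comp (C u * X + C a)
  have heval (t : ℂ) : h.eval t = f.eval (a + t * u) := by
    simp only [h, eval_comp, eval_add, eval_mul, eval_C, eval_X]
    congr 1
    ring
  have hcrit' (t : ℂ) (ht : (derivative h).eval t = 0) : t.re < 1 / 2 := by
    simp only [h, derivative_comp, eval_mul, eval_comp, derivative_add, derivative_C_mul_X,
      derivative_C, add_zero, eval_C, eval_add, eval_X, mul_eq_zero, hu, false_or] at ht
    refine Complex.re_lt_half_of_norm_add_mul_le (by rwa [add_sub_cancel]) (hcrit _ ?_)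
    rwa [add_comm, mul_comm]
  obtain ⟨c, hc, hroots⟩ := exists_lt_forall_re_le hcrit'
  refine apolarPairing_ne_zero (natDegree_derivative_le h) natDegree_bisectorPoly hroots
    (fun ζ hζ => (re_eq_half_of_eval_bisectorPoly_eq_zero hζ).symm ▸ hc) ?_
  rw [apolarPairing_derivative_bisectorPoly (by omega), heval, heval]
  simp [ha, hz, u]

theorem norm_le_of_eval_iterate_primitive_eq_zero {p : ℂ[X]} {r : ℝ} (hr : 0 ≤ r)
    (hp : ∀ z, p.eval z = 0 → ‖z‖ ≤ r) (a : ℂ) (k : ℕ) {z : ℂ}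
    (hz : ((primitive a)^[k] p).eval z = 0) : ‖z‖ ≤ 2 ^ k * (‖a‖ + r) - ‖a‖ := by
  induction k generalizing z with
  | zero => simpa using hp z hz
  | succ k ih =>
    have hR : 0 ≤ 2 ^ k * (‖a‖ + r) - ‖a‖ := by
      nlinarith [one_le_pow₀ (one_le_two : (1 : ℝ) ≤ 2) (n := k), norm_nonneg a]
    have := norm_le_of_eval_eq_zero_of_critical_le hR
      (fun w hw => ih (by rwa [Function.iterate_succ_apply', derivative_primitive] at hw))
      (by rw [Function.iterate_succ_apply', eval_primitive_self]) hz
    rw [pow_succ]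
    linarith

theorem stmt19_general (n m : ℕ) (hm : 0 < m) (lam : ℂ) (r : ℝ) (hr : 0 < r)
    (p : Polynomial ℂ)
    (hzeros : ∀ z : ℂ, p.eval z = 0 → ‖z‖ ≤ r) :
    ∀ z : ℂ, iterI n m lam p z = 0 →
      ‖z‖ ≤ 2 ^ m * (‖lam‖ + r) - ‖lam‖ := by
  intro z hz
  obtain ⟨M, rfl⟩ : ∃ M, m = M + 1 := ⟨m - 1, by omega⟩
  simp only [iterI, add_tsub_cancel_right, segInt_pow_mul_eval, mul_eq_zero, div_eq_zero_iff,
    Nat.cast_eq_zero, Nat.factorial_ne_zero, or_self, false_or] at hz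
  exact norm_le_of_eval_iterate_primitive_eq_zero hr.le hzeros lam (M + 1) hz

theorem stmt19 (n m : ℕ) (hn : 0 < n) (hm : 0 < m) (lam : ℂ) (r : ℝ) (hr : 0 < r)
    (p : Polynomial ℂ) (hdeg : p.natDegree = n)
    (hzeros : ∀ z : ℂ, p.eval z = 0 → ‖z‖ ≤ r) :
    ∀ z : ℂ, iterI n m lam p z = 0 →
      ‖z‖ ≤ 2 ^ m * (‖lam‖ + r) - ‖lam‖ :=
  stmt19_general n m hm lam r hr p hzeros
end
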